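/- arXiv:0707.2732 — 9 statements merged into one kernel-verified Lean document; each statement's English description precedes it below -/
import Mathlib

section
/- For any partition λ and any integer k ≥ 1, the k-th power sum of the contents of λ satisfies p_k(A_λ) = Σ_{r=1}^{k} S(k,r)/(r+1) · p*_{r+1}(λ), where S(k,r) are Stirling numbers of the second kind and p*_m(λ) = Σ_{i=1}^{ℓ(λ)} ((λ_i − i + 1)_m − (−i+1)_m) are shifted power sums. -/
/-- Stirling numbers of the second kind. -/
def stirling2 : ℕ → ℕ → ℕ
  | 0, 0 => 1
  | 0, _ + 1 => 0
  | _ + 1, 0 => 0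
  | n + 1, k + 1 => (k + 1) * stirling2 n (k + 1) + stirling2 n k

/-- Falling factorial `(z)_m = z(z-1)⋯(z-m+1)` over `ℚ`. -/
def fallFac (z : ℚ) (m : ℕ) : ℚ := ∏ t ∈ Finset.range m, (z - t)

/-- Shifted power sum `p*_m(λ) = Σ_{i=1}^{ℓ(λ)} ((λ_i-i+1)_m - (-i+1)_m)`. -/
def shiftedPowerSum (l : ℕ) (lam : ℕ → ℕ) (m : ℕ) : ℚ :=
  ∑ i ∈ Finset.Icc 1 l, (fallFac ((lam i : ℚ) - i + 1) m - fallFac (-(i : ℚ) + 1) m)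

lemma stirling2_eq_zero : ∀ {n m : ℕ}, n < m → stirling2 n m = 0 := by
  intro n
  induction n with
  | zero => intro m h; match m, h with | (s+1), _ => rfl
  | succ n ih =>
    intro m h
    match m, h with
    | (s+1), h =>
      have h1 : n < s + 1 := by omega
      have h2 : n < s := by omega
      simp [stirling2, ih h1, ih h2]

lemma fallFac_succ (z : ℚ) (m : ℕ) : fallFac z (m+1) = fallFac z m * (z - m) := by
  simp [fallFac, Finset.prod_range_succ]

lemma fallFac_succ_shift (z : ℚ) (m : ℕ) :
    fallFac (z+1) (m+1) = fallFac z m * (z+1) := by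
  rw [fallFac, Finset.prod_range_succ']
  simp only [Nat.cast_add, Nat.cast_one, fallFac]
  congr 1
  · apply Finset.prod_congr rfl; intro t _; push_cast; ring
  · ring

lemma key (z : ℚ) (r : ℕ) :
    fallFac (z+1) (r+1) - fallFac z (r+1) = (r+1) * fallFac z r := by
  rw [fallFac_succ_shift, fallFac_succ]; ring

lemma pow_eq_sum (k : ℕ) (x : ℚ) :
    x ^ k = ∑ r ∈ Finset.range (k+1), (stirling2 k r : ℚ) * fallFac x r := by
  induction k with
  | zero => simp [stirling2, fallFac]
  | succ k ih =>
    have step : ∀ r : ℕ, x * fallFac x r = fallFac x (r+1) + r * fallFac x r := by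
      intro r; rw [fallFac_succ]; ring
    calc x ^ (k+1) = x * x ^ k := by ring
      _ = ∑ r ∈ Finset.range (k+1), ((stirling2 k r : ℚ) * fallFac x (r+1)
            + (stirling2 k r : ℚ) * (r * fallFac x r)) := by
          rw [ih, Finset.mul_sum]
          apply Finset.sum_congr rfl
          intro r _
          rw [mul_left_comm, step]; ring
      _ = ∑ r ∈ Finset.range (k+1), (stirling2 k r : ℚ) * fallFac x (r+1)
            + ∑ r ∈ Finset.range (k+1), (stirling2 k r : ℚ) * (r * fallFac x r) := by
          rw [Finset.sum_add_distrib]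
      _ = ∑ r ∈ Finset.range (k+2), (stirling2 (k+1) r : ℚ) * fallFac x r := by
          rw [Finset.sum_range_succ' (fun r => (stirling2 (k+1) r : ℚ) * fallFac x r) (k+1)]
          have h0 : (stirling2 (k+1) 0 : ℚ) = 0 := by rfl
          rw [h0]
          simp only [zero_mul, add_zero]
          have : ∀ r ∈ Finset.range (k+1), (stirling2 (k+1) (r+1) : ℚ) * fallFac x (r+1)
              = (stirling2 k r : ℚ) * fallFac x (r+1)
                + ((r:ℚ)+1) * (stirling2 k (r+1) : ℚ) * fallFac x (r+1) := by
            intro r _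
            show ((((r:ℕ)+1) * stirling2 k (r+1) + stirling2 k r : ℕ) : ℚ) * fallFac x (r+1) = _
            push_cast; ring
          rw [Finset.sum_congr rfl this, Finset.sum_add_distrib]
          congr 1
          -- second pieces: Σ_{r<k+1} r S(k,r) (x)_r = Σ_{r<k+1} (r+1) S(k,r+1) (x)_{r+1}
          have hg := Finset.sum_range_succ' (fun r => (r:ℚ) * (stirling2 k r : ℚ) * fallFac x r) (k+1)
          calc ∑ r ∈ Finset.range (k+1), (stirling2 k r : ℚ) * ((r:ℚ) * fallFac x r)
              = ∑ r ∈ Finset.range (k+2), (r:ℚ) * (stirling2 k r : ℚ) * fallFac x r := by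
                symm
                rw [Finset.sum_range_succ]
                have hz : (stirling2 k (k+1) : ℚ) = 0 := by
                  rw [stirling2_eq_zero (by omega)]; simp
                rw [hz]
                simp only [mul_zero, zero_mul, add_zero]
                exact Finset.sum_congr rfl fun r _ => by ring
            _ = ∑ r ∈ Finset.range (k+1),
                  ((r:ℚ)+1) * (stirling2 k (r+1) : ℚ) * fallFac x (r+1) := by
                rw [hg]
                push_cast
                simp

lemma telescope (i : ℚ) (r : ℕ) (n : ℕ) :
    ∑ j ∈ Finset.Icc 1 n, fallFac ((j:ℚ) - i) r
      = (fallFac ((n:ℚ) - i + 1) (r+1) - fallFac (-i + 1) (r+1)) / (r+1) := by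
  induction n with
  | zero =>
    simp only [Nat.cast_zero]
    rw [show (0:ℚ) - i + 1 = -i + 1 by ring]
    simp
  | succ n ih =>
    rw [Finset.sum_Icc_succ_top (by omega), ih]
    have h := key ((n:ℚ) - i + 1) r
    have harg1 : ((n+1:ℕ):ℚ) - i = (n:ℚ) - i + 1 := by push_cast; ring
    have harg2 : ((n+1:ℕ):ℚ) - i + 1 = ((n:ℚ) - i + 1) + 1 := by push_cast; ring
    rw [harg1]
    have hr : ((r:ℚ)+1) ≠ 0 := by positivity
    field_simp
    linarith [h]

theorem stmt_1 (l : ℕ) (lam : ℕ → ℕ)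
    (hmono : ∀ i j, 1 ≤ i → i ≤ j → j ≤ l → lam j ≤ lam i)
    (hpos : ∀ i, 1 ≤ i → i ≤ l → 1 ≤ lam i)
    (k : ℕ) (hk : 1 ≤ k) :
    (∑ i ∈ Finset.Icc 1 l, ∑ j ∈ Finset.Icc 1 (lam i), ((j : ℚ) - i) ^ k) =
      ∑ r ∈ Finset.Icc 1 k, (stirling2 k r : ℚ) / (r + 1) * shiftedPowerSum l lam (r + 1) := by
  have main : ∀ i : ℕ, ∑ j ∈ Finset.Icc 1 (lam i), ((j : ℚ) - i) ^ k
      = ∑ r ∈ Finset.Icc 1 k, (stirling2 k r : ℚ) / (r + 1) *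
          (fallFac ((lam i : ℚ) - i + 1) (r+1) - fallFac (-(i : ℚ) + 1) (r+1)) := by
    intro i
    calc ∑ j ∈ Finset.Icc 1 (lam i), ((j : ℚ) - i) ^ k
        = ∑ j ∈ Finset.Icc 1 (lam i), ∑ r ∈ Finset.range (k+1),
            (stirling2 k r : ℚ) * fallFac ((j:ℚ) - i) r := by
          exact Finset.sum_congr rfl fun j _ => pow_eq_sum k _
      _ = ∑ r ∈ Finset.range (k+1), ∑ j ∈ Finset.Icc 1 (lam i),
            (stirling2 k r : ℚ) * fallFac ((j:ℚ) - i) r := Finset.sum_comm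
      _ = ∑ r ∈ Finset.range (k+1), (stirling2 k r : ℚ) / (r + 1) *
            (fallFac ((lam i : ℚ) - i + 1) (r+1) - fallFac (-(i : ℚ) + 1) (r+1)) := by
          apply Finset.sum_congr rfl
          intro r _
          rw [← Finset.mul_sum, telescope (i:ℚ) r (lam i)]
          ring
      _ = ∑ r ∈ Finset.Icc 1 k, (stirling2 k r : ℚ) / (r + 1) *
            (fallFac ((lam i : ℚ) - i + 1) (r+1) - fallFac (-(i : ℚ) + 1) (r+1)) := by
          symm
          apply Finset.sum_subset
          · intro r hr
            simp only [Finset.mem_Icc] at hr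
            simp only [Finset.mem_range]; omega
          · intro r hr hnr
            simp only [Finset.mem_range, Finset.mem_Icc] at hr hnr
            have : r = 0 := by omega
            subst this
            obtain ⟨m, rfl⟩ : ∃ m, k = m + 1 := ⟨k - 1, by omega⟩
            show (stirling2 (m+1) 0 : ℚ) / _ * _ = 0
            have : stirling2 (m+1) 0 = 0 := rfl
            rw [this]; simp
  rw [Finset.sum_congr rfl fun i _ => main i]
  rw [Finset.sum_comm]
  apply Finset.sum_congr rfl
  intro r _
  rw [shiftedPowerSum, Finset.mul_sum]
end

section
/- Lagrange interpolation lemma: let A and B be finite sets of distinct complex numbers with |A| = m and |B| = n, with the elements of A pairwise distinct. For any integer r ≥ 0, Σ_{a∈A} a^r · ∏_{b∈B}(a−b) / ∏_{c∈A, c≠a}(a−c) = h_{n−m+r+1}(A−B), where h_k(A−B) is the coefficient of z^k in ∏_{b∈B}(1−zb)/∏_{a∈A}(1−za) (and h_k = 0 for k < 0). -/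
/-!
Write `f[A] = ∑_{a ∈ A} f a / ∏_{c ∈ A, c ≠ a} (a - c)` (the divided difference). Replacing
`f` by `(x - b) * f` corresponds to adding `b` to `B`, i.e. to multiplying the generating series by
`1 - b z`, so by induction on `B` it suffices to treat `B = ∅`. There, for every `t ∈ A`, both sides
obey the same recursion: `(x * f)[A] = t * f[A] + f[A ∖ t]`, and `h_k(A) = t h_{k-1}(A) + h_k(A ∖ t)`
since `(1 - t z) H_z(A) = H_z(A ∖ t)`. By strong induction on `|A|`, using this recursion at two
distinct points of `A` determines `(x ^ r)[A]` and shows it equals `h_{r-|A|+1}(A)`; sets with at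
most one element are checked directly.
-/

open PowerSeries

/-- The generating series `H_z(A-B) = ∏_{b∈B}(1-zb) / ∏_{a∈A}(1-za)` as a formal
power series. -/
noncomputable def diffSeries (A B : Finset ℂ) : PowerSeries ℂ :=
  (∏ b ∈ B, (1 - PowerSeries.C b * PowerSeries.X)) *
    (∏ a ∈ A, (1 - PowerSeries.C a * PowerSeries.X))⁻¹

/-- `h_k(A-B)` for an integer index `k`, zero for `k < 0`. -/
noncomputable def hDiff (A B : Finset ℂ) (k : ℤ) : ℂ :=
  if 0 ≤ k then PowerSeries.coeff k.toNat (diffSeries A B) else 0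

namespace PowerSeries

variable {R : Type*} [CommRing R]

noncomputable def coeffInt (k : ℤ) (f : R⟦X⟧) : R :=
  if 0 ≤ k then coeff k.toNat f else 0

@[simp]
theorem coeffInt_natCast (n : ℕ) (f : R⟦X⟧) : coeffInt n f = coeff n f := by
  simp [coeffInt]

theorem coeffInt_of_neg {k : ℤ} (hk : k < 0) (f : R⟦X⟧) : coeffInt k f = 0 :=
  if_neg hk.not_ge

theorem coeffInt_one (k : ℤ) : coeffInt k (1 : R⟦X⟧) = if k = 0 then 1 else 0 := by
  unfold coeffInt
  split_ifs <;> simp_all [coeff_one]; omega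

theorem coeffInt_one_sub_C_mul_X_mul (t : R) (f : R⟦X⟧) (k : ℤ) :
    coeffInt k ((1 - C t * X) * f) = coeffInt k f - t * coeffInt (k - 1) f := by
  rcases lt_or_ge k 0 with hk | hk
  · simp [coeffInt_of_neg hk, coeffInt_of_neg (show k - 1 < 0 by omega)]
  lift k to ℕ using hk
  rw [coeffInt_natCast, coeffInt_natCast]
  cases k with
  | zero => simp [sub_mul, mul_assoc, coeffInt_of_neg]
  | succ n =>
    rw [show ((n + 1 : ℕ) : ℤ) - 1 = n by push_cast; ring, coeffInt_natCast]
    simp [sub_mul, mul_assoc, coeff_succ_X_mul]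

end PowerSeries

theorem hDiff_eq_coeffInt (A B : Finset ℂ) (k : ℤ) :
    hDiff A B k = coeffInt k (diffSeries A B) :=
  rfl

theorem hDiff_empty_empty (k : ℤ) : hDiff ∅ ∅ k = if k = 0 then 1 else 0 := by
  simp [hDiff_eq_coeffInt, diffSeries, coeffInt_one]

theorem diffSeries_insert_right (A : Finset ℂ) {b : ℂ} {B : Finset ℂ} (hb : b ∉ B) :
    diffSeries A (insert b B) = (1 - C b * X) * diffSeries A B := by
  rw [diffSeries, Finset.prod_insert hb, mul_assoc, diffSeries]

theorem diffSeries_erase_left {t : ℂ} {A : Finset ℂ} (ht : t ∈ A) (B : Finset ℂ) :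
    diffSeries (A.erase t) B = (1 - C t * X) * diffSeries A B := by
  have hunit : (1 - C t * X) * (1 - C t * X)⁻¹ = 1 :=
    PowerSeries.mul_inv_cancel _ (by simp)
  rw [diffSeries, diffSeries, ← Finset.mul_prod_erase A _ ht, PowerSeries.mul_inv_rev]
  linear_combination -(∏ b ∈ B, (1 - C b * X)) * (∏ a ∈ A.erase t, (1 - C a * X))⁻¹ * hunit

theorem hDiff_insert_right (A : Finset ℂ) {b : ℂ} {B : Finset ℂ} (hb : b ∉ B) (k : ℤ) :
    hDiff A (insert b B) k = hDiff A B k - b * hDiff A B (k - 1) := by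
  simp only [hDiff_eq_coeffInt, diffSeries_insert_right A hb, coeffInt_one_sub_C_mul_X_mul]

theorem hDiff_of_mem {t : ℂ} {A : Finset ℂ} (ht : t ∈ A) (B : Finset ℂ) (k : ℤ) :
    hDiff A B k = t * hDiff A B (k - 1) + hDiff (A.erase t) B k := by
  rw [hDiff_eq_coeffInt, hDiff_eq_coeffInt, hDiff_eq_coeffInt, diffSeries_erase_left ht,
    coeffInt_one_sub_C_mul_X_mul]
  ring

theorem hDiff_singleton_empty (t : ℂ) (r : ℕ) : hDiff {t} ∅ r = t ^ r := by
  induction r with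
  | zero =>
    rw [hDiff_of_mem (Finset.mem_singleton_self t), Finset.erase_singleton, hDiff_empty_empty]
    simp [hDiff_eq_coeffInt, coeffInt_of_neg]
  | succ r ih =>
    rw [hDiff_of_mem (Finset.mem_singleton_self t), Finset.erase_singleton, hDiff_empty_empty]
    push_cast
    simp [ih, pow_succ']
    omega

section DividedDifference

variable {K : Type*} [Field K] [DecidableEq K]

def divDiff (A : Finset K) (f : K → K) : K :=
  ∑ a ∈ A, f a / ∏ c ∈ A.erase a, (a - c)

theorem divDiff_sub_mul_of_mem {t : K} {A : Finset K} (ht : t ∈ A) (f : K → K) :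
    divDiff A (fun x => (x - t) * f x) = divDiff (A.erase t) f := by
  unfold divDiff
  rw [← Finset.sum_erase A (a := t) (by simp)]
  refine Finset.sum_congr rfl fun a ha => ?_
  have hta : t ≠ a := (Finset.ne_of_mem_erase ha).symm
  rw [← Finset.mul_prod_erase (A.erase a) (a - ·) (Finset.mem_erase.2 ⟨hta, ht⟩),
    Finset.erase_right_comm, mul_div_mul_left _ _ (sub_ne_zero.2 hta.symm)]

theorem divDiff_id_mul_of_mem {t : K} {A : Finset K} (ht : t ∈ A) (f : K → K) :
    divDiff A (fun x => x * f x) = t * divDiff A f + divDiff (A.erase t) f := by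
  rw [← divDiff_sub_mul_of_mem ht]
  simp only [divDiff, Finset.mul_sum, ← Finset.sum_add_distrib]
  exact Finset.sum_congr rfl fun a _ => by ring

end DividedDifference

theorem divDiff_pow_eq_hDiff (A : Finset ℂ) (r : ℕ) :
    divDiff A (· ^ r) = hDiff A ∅ (r - A.card + 1) := by
  induction A using Finset.strongInduction generalizing r with
  | H A ih =>
    obtain h | h | h : A.card = 0 ∨ A.card = 1 ∨ 1 < A.card := by omega
    · rw [Finset.card_eq_zero.1 h]
      simp [divDiff, hDiff_empty_empty]
      omega
    · obtain ⟨t, rfl⟩ := Finset.card_eq_one.1 h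
      simp [divDiff, hDiff_singleton_empty]
    · -- Both sides obey the same recursion at every point of `A`; comparing it at two distinct
      -- points eliminates the unknown value at `x ^ (r + 1)`.
      have recur : ∀ s ∈ A, divDiff A (fun x => x * x ^ r) - hDiff A ∅ (r - A.card + 1 + 1) =
          s * (divDiff A (· ^ r) - hDiff A ∅ (r - A.card + 1)) := by
        intro s hs
        have hE := ih _ (Finset.erase_ssubset hs) r
        rw [Finset.card_erase_of_mem hs,
          show (r : ℤ) - (A.card - 1 : ℕ) + 1 = r - A.card + 1 + 1 by omega] at hE
        rw [divDiff_id_mul_of_mem hs, hDiff_of_mem hs _ (r - A.card + 1 + 1), add_sub_cancel_right,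
          hE]
        ring
      obtain ⟨t, ht, u, hu, htu⟩ := Finset.one_lt_card.1 h
      have hD := (recur t ht).symm.trans (recur u hu)
      refine sub_eq_zero.1 ((mul_eq_zero.1 ?_).resolve_left (sub_ne_zero.2 htu))
      linear_combination hD

theorem divDiff_pow_mul_prod_sub_eq_hDiff (A B : Finset ℂ) (r : ℕ) :
    divDiff A (fun x => x ^ r * ∏ b ∈ B, (x - b)) = hDiff A B (B.card - A.card + r + 1) := by
  induction B using Finset.induction_on generalizing r with
  | empty =>
    simp only [Finset.prod_empty, mul_one, Finset.card_empty, divDiff_pow_eq_hDiff]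
    congr 1
    ring
  | insert b B hb ih =>
    have hsplit : divDiff A (fun x => x ^ r * ∏ c ∈ insert b B, (x - c)) =
        divDiff A (fun x => x ^ (r + 1) * ∏ c ∈ B, (x - c)) -
          b * divDiff A (fun x => x ^ r * ∏ c ∈ B, (x - c)) := by
      simp only [divDiff, Finset.mul_sum, ← Finset.sum_sub_distrib, Finset.prod_insert hb]
      exact Finset.sum_congr rfl fun a _ => by ring
    rw [hsplit, ih, ih, hDiff_insert_right A hb, Finset.card_insert_of_notMem hb]
    push_cast
    ring_nf

theorem stmt_3 (A B : Finset ℂ) (m n : ℕ) (hm : A.card = m) (hn : B.card = n) (r : ℕ) :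
    (∑ a ∈ A, a ^ r * (∏ b ∈ B, (a - b)) / (∏ c ∈ A.erase a, (a - c))) =
      hDiff A B ((n : ℤ) - m + r + 1) := by
  subst hm hn
  exact divDiff_pow_mul_prod_sub_eq_hDiff A B r
end

section
/- The numbers (n choose p)_k = (n/k)·Σ_{r≥0} C(p,r)·C(n−p,r)·C(n−r−1,k−r−1) are nonnegative integers for all 0 ≤ p ≤ n and 1 ≤ k ≤ n, and vanish for k > n. -/
open Finset

/-- `E` coefficients. Here the actual parameters are `p+1` and `q+1`. -/
def Et (p q r : ℕ) : ℕ :=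
  (p+1).choose (r+1) * q.choose r + p.choose r * (q+1).choose (r+1)

lemma core (p q s a : ℕ) (h : p + q = s + a) :
    (p + q + 2) * ((p+1).choose (s+1) * (q+1).choose (s+1)) =
      (s + 2) * Et p q (s+1) + (a + 1) * Et p q s := by
  rcases le_or_gt s p with hsp | hsp
  · rcases le_or_gt s q with hsq | hsq
    · obtain ⟨p', rfl⟩ : ∃ p', p = s + p' := ⟨p - s, by omega⟩
      obtain ⟨q', rfl⟩ : ∃ q', q = s + q' := ⟨q - s, by omega⟩
      obtain rfl : a = p' + q' + s := by omega
      have hu : (s + p').choose (s+1) * (s+1) = (s + p').choose s * p' := by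
        have := Nat.choose_succ_right_eq (s + p') s
        simpa using this
      have hv : (s + q').choose (s+1) * (s+1) = (s + q').choose s * q' := by
        have := Nat.choose_succ_right_eq (s + q') s
        simpa using this
      have hP : (s + p' + 1) * (s + p').choose (s+1) =
          (s + p' + 1).choose (s+2) * (s+2) := Nat.add_one_mul_choose_eq (s+p') (s+1)
      have hQ : (s + q' + 1) * (s + q').choose (s+1) =
          (s + q' + 1).choose (s+2) * (s+2) := Nat.add_one_mul_choose_eq (s+q') (s+1)
      have hpas : (s + p' + 1).choose (s+1) = (s+p').choose s + (s+p').choose (s+1) :=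
        Nat.choose_succ_succ _ _
      have hqas : (s + q' + 1).choose (s+1) = (s+q').choose s + (s+q').choose (s+1) :=
        Nat.choose_succ_succ _ _
      simp only [Et, hpas, hqas]
      zify at hu hv hP hQ ⊢
      linear_combination ((s + q').choose (s+1) : ℤ) * hP + (((s + p').choose (s+1) : ℤ)) * hQ
        + (((s+p').choose s : ℤ)) * hv + (((s+q').choose s : ℤ)) * hu
    · have h1 : q.choose s = 0 := Nat.choose_eq_zero_of_lt (by omega)
      have h2 : q.choose (s+1) = 0 := Nat.choose_eq_zero_of_lt (by omega)
      have h3 : (q+1).choose (s+1) = 0 := Nat.choose_eq_zero_of_lt (by omega)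
      have h4 : (q+1).choose (s+2) = 0 := Nat.choose_eq_zero_of_lt (by omega)
      simp [Et, h1, h2, h3, h4]
  · have h1 : p.choose s = 0 := Nat.choose_eq_zero_of_lt (by omega)
    have h2 : p.choose (s+1) = 0 := Nat.choose_eq_zero_of_lt (by omega)
    have h3 : (p+1).choose (s+1) = 0 := Nat.choose_eq_zero_of_lt (by omega)
    have h4 : (p+1).choose (s+2) = 0 := Nat.choose_eq_zero_of_lt (by omega)
    simp [Et, h1, h2, h3, h4]

def DD (n p q k : ℕ) : ℕ → ℕ
  | 0 => 0
  | (s+1) => (k - s - 1) * Et p q s * ((n - s - 1).choose (k - s - 1))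

lemma perterm (n p q k r : ℕ) (hn : n = p + q + 2) (hr : r < k) (hk : k ≤ n) :
    n * ((p+1).choose r * (q+1).choose r * ((n - r - 1).choose (k - r - 1))) + DD n p q k (r+1)
      = k * (Et p q r * ((n - r - 1).choose (k - r - 1))) + DD n p q k r := by
  cases r with
  | zero =>
    obtain ⟨k', rfl⟩ : ∃ k', k = k' + 1 := ⟨k - 1, by omega⟩
    have he : Et p q 0 = n := by
      simp [Et, Nat.choose_one_right]; omega
    simp only [DD, Nat.choose_zero_right, he]
    have : k' + 1 - 0 - 1 = k' := by omega
    rw [this]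
    ring_nf
  | succ s =>
    obtain ⟨b, rfl⟩ : ∃ b, k = s + 2 + b := ⟨k - s - 2, by omega⟩
    obtain ⟨a, hna⟩ : ∃ a, n = s + 2 + a := ⟨n - s - 2, by omega⟩
    have hcore := core p q s a (by omega)
    rw [← hn] at hcore
    have habs : (a+1) * a.choose b = (a+1).choose (b+1) * (b+1) := Nat.add_one_mul_choose_eq a b
    have e1 : n - (s+1) - 1 = a := by omega
    have e2 : s + 2 + b - (s+1) - 1 = b := by omega
    have e5 : n - s - 1 = a + 1 := by omega
    have e6 : s + 2 + b - s - 1 = b + 1 := by omega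
    simp only [DD, e1, e2, e5, e6]
    zify at hcore habs ⊢
    linear_combination (a.choose b : ℤ) * hcore + (Et p q s : ℤ) * habs

lemma mainsum (n p q k : ℕ) (hn : n = p + q + 2) (hk1 : 1 ≤ k) (hk : k ≤ n) :
    n * ∑ r ∈ range k, (p+1).choose r * (q+1).choose r * ((n - r - 1).choose (k - r - 1))
      = k * ∑ r ∈ range k, Et p q r * ((n - r - 1).choose (k - r - 1)) := by
  have hDk : DD n p q k k = 0 := by
    obtain ⟨k', rfl⟩ : ∃ k', k = k' + 1 := ⟨k - 1, by omega⟩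
    show (k' + 1 - k' - 1) * _ * _ = 0
    rw [show k' + 1 - k' - 1 = 0 from by omega]
    ring
  have h1 := Finset.sum_range_succ' (DD n p q k) k
  have h2 := Finset.sum_range_succ (DD n p q k) k
  have tel : ∑ r ∈ range k, DD n p q k (r+1) = ∑ r ∈ range k, DD n p q k r := by
    have hD0 : DD n p q k 0 = 0 := rfl
    omega
  have hsum : ∑ r ∈ range k,
      (n * ((p+1).choose r * (q+1).choose r * ((n - r - 1).choose (k - r - 1))) + DD n p q k (r+1))
      = ∑ r ∈ range k,
      (k * (Et p q r * ((n - r - 1).choose (k - r - 1))) + DD n p q k r) :=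
    Finset.sum_congr rfl (fun r hr => perterm n p q k r hn (Finset.mem_range.mp hr) hk)
  rw [Finset.sum_add_distrib, Finset.sum_add_distrib, tel] at hsum
  rw [Finset.mul_sum, Finset.mul_sum]
  omega

/-- The generalized binomial coefficient `(n choose p)_k`. -/
def nbi (n p k : ℕ) : ℚ :=
  (n : ℚ) / k * ∑ r ∈ Finset.range k,
    (Nat.choose p r : ℚ) * Nat.choose (n - p) r * Nat.choose (n - r - 1) (k - r - 1)

theorem stmt_9 (n p k : ℕ) (hp : p ≤ n) (hk1 : 1 ≤ k) :
    (k ≤ n → ∃ m : ℕ, nbi n p k = m) ∧ (n < k → nbi n p k = 0) := by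
  constructor
  · intro hkn
    have hn1 : 1 ≤ n := le_trans hk1 hkn
    have hk0 : (k : ℚ) ≠ 0 := Nat.cast_ne_zero.mpr (by omega)
    have hkey0 : n * (n-1).choose (k-1) = n.choose k * k := by
      have h := Nat.add_one_mul_choose_eq (n-1) (k-1)
      rw [show n - 1 + 1 = n from by omega, show k - 1 + 1 = k from by omega] at h
      exact h
    by_cases hp0 : p = 0
    · subst hp0
      refine ⟨n.choose k, ?_⟩
      unfold nbi
      rw [Finset.sum_eq_single_of_mem 0 (Finset.mem_range.mpr hk1)
        (fun r _ hr0 => by simp [Nat.choose_eq_zero_of_lt (show 0 < r from by omega)])]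
      rw [div_mul_eq_mul_div, div_eq_iff hk0]
      push_cast [Nat.choose_zero_right, Nat.sub_zero]
      exact_mod_cast (by simpa using hkey0 :
        n * (1 * 1 * (n-1).choose (k-1)) = n.choose k * k)
    by_cases hpn : p = n
    · subst hpn
      refine ⟨p.choose k, ?_⟩
      unfold nbi
      rw [show p - p = 0 from by omega]
      rw [Finset.sum_eq_single_of_mem 0 (Finset.mem_range.mpr hk1)
        (fun r _ hr0 => by simp [Nat.choose_eq_zero_of_lt (show 0 < r from by omega)])]
      rw [div_mul_eq_mul_div, div_eq_iff hk0]
      push_cast [Nat.choose_zero_right, Nat.sub_zero]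
      exact_mod_cast (by simpa using hkey0 :
        p * (1 * 1 * (p-1).choose (k-1)) = p.choose k * k)
    · obtain ⟨p', rfl⟩ : ∃ p', p = p' + 1 := ⟨p - 1, by omega⟩
      obtain ⟨q', rfl⟩ : ∃ q', n = p' + q' + 2 := ⟨n - p' - 2, by omega⟩
      refine ⟨∑ r ∈ Finset.range k, Et p' q' r * ((p' + q' + 2 - r - 1).choose (k - r - 1)), ?_⟩
      unfold nbi
      rw [show p' + q' + 2 - (p' + 1) = q' + 1 from by omega]
      rw [div_mul_eq_mul_div, div_eq_iff hk0]
      have key := mainsum (p' + q' + 2) p' q' k rfl hk1 hkn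
      push_cast
      exact_mod_cast congrArg (Nat.cast : ℕ → ℚ) (key.trans (Nat.mul_comm k _))
  · intro hnk
    unfold nbi
    rcases Nat.eq_zero_or_pos n with h0 | hn1
    · simp [h0]
    · rw [Finset.sum_eq_zero, mul_zero]
      intro r _
      by_cases h1 : p < r
      · simp [Nat.choose_eq_zero_of_lt h1]
      by_cases h2 : n - p < r
      · simp [Nat.choose_eq_zero_of_lt h2]
      · have h3 : n - r - 1 < k - r - 1 := by omega
        simp [Nat.choose_eq_zero_of_lt h3]
end

section
/- For integers r ≥ 0, i ≥ 1, p ≥ 1, one has Σ_{j≥0} (−1)^j · C(i+j−1, i−1) · s(p, i+j−r−1) = (−1)^r · Σ_{k≥0} (−1)^k · C(r,k) · s(p+1, i−k), where s denotes the signed Stirling numbers of the first kind. -/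
/-- Signed Stirling numbers of the first kind with integer index,
zero for negative index: `(z)_p = Σ_m s(p,m) z^m`. -/
noncomputable def stirlingFirst (p : ℕ) (m : ℤ) : ℤ :=
  if 0 ≤ m then (descPochhammer ℤ p).coeff m.toNat else 0

namespace Stmt11Aux

lemma S_neg (p : ℕ) {m : ℤ} (h : m < 0) : stirlingFirst p m = 0 := by
  simp [stirlingFirst, not_le.mpr h]

lemma S_nat (p n : ℕ) : stirlingFirst p (n : ℤ) = (descPochhammer ℤ p).coeff n := by
  simp [stirlingFirst]

lemma S_gt (p : ℕ) {m : ℤ} (h : (p : ℤ) < m) : stirlingFirst p m = 0 := by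
  have h0 : 0 ≤ m := le_trans (Int.ofNat_nonneg p) h.le
  rw [stirlingFirst, if_pos h0]
  apply Polynomial.coeff_eq_zero_of_natDegree_lt
  rw [descPochhammer_natDegree]
  omega

lemma S_zero_succ (p : ℕ) : stirlingFirst (p + 1) 0 = 0 := by
  have h : ((0 : ℕ) : ℤ) = (0 : ℤ) := rfl
  rw [← h, S_nat, Polynomial.coeff_zero_eq_eval_zero, descPochhammer_eval_zero]
  simp

lemma S_rec (p : ℕ) (m : ℤ) :
    stirlingFirst (p + 1) m = stirlingFirst p (m - 1) - p * stirlingFirst p m := by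
  rcases lt_trichotomy m 0 with hm | hm | hm
  · rw [S_neg _ hm, S_neg _ (by omega : m - 1 < 0), S_neg _ hm]; ring
  · subst hm
    rw [S_zero_succ, S_neg _ (by omega : (0:ℤ) - 1 < 0)]
    rcases Nat.eq_zero_or_pos p with hp | hp
    · subst hp; simp
    · obtain ⟨q, rfl⟩ : ∃ q, p = q + 1 := ⟨p - 1, by omega⟩
      rw [S_zero_succ]; ring
  · obtain ⟨n, rfl⟩ : ∃ n : ℕ, m = (n : ℤ) + 1 := ⟨(m - 1).toNat, by omega⟩
    have h1 : ((n : ℤ) + 1 - 1) = (n : ℤ) := by ring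
    rw [h1]
    have h2 : ((n : ℤ) + 1) = ((n + 1 : ℕ) : ℤ) := by push_cast; ring
    rw [h2, S_nat, S_nat, S_nat]
    rw [descPochhammer_succ_right]
    have h3 : ((p : Polynomial ℤ)) = Polynomial.C ((p : ℤ)) := by simp
    rw [h3, Polynomial.coeff_mul_X_sub_C]
    ring

/-- LHS sum reparametrized with `t = i - 1`, flexible range `N`. -/
noncomputable def Asum (p r t N : ℕ) : ℤ :=
  ∑ j ∈ Finset.range N,
    (-1 : ℤ) ^ j * ((t + j).choose t : ℤ) * stirlingFirst p ((t : ℤ) + j - r)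

/-- RHS inner sum, with integer shift parameter. -/
noncomputable def Bsum (p r : ℕ) (t : ℤ) : ℤ :=
  ∑ k ∈ Finset.range (r + 1),
    (-1 : ℤ) ^ k * (r.choose k : ℤ) * stirlingFirst (p + 1) (t + 1 - k)

lemma Asum_ext (p r t : ℕ) {N : ℕ} (h : p + r + 1 ≤ N) :
    Asum p r t N = Asum p r t (p + r + 1) := by
  unfold Asum
  refine (Finset.sum_subset (Finset.range_subset_range.mpr h) ?_).symm
  intro j hj hj'
  simp only [Finset.mem_range] at hj hj'
  have hz : stirlingFirst p ((t : ℤ) + j - r) = 0 := S_gt p (by omega)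
  rw [hz, mul_zero]

lemma Bsum_neg_one (p r : ℕ) : Bsum p r (-1) = 0 := by
  unfold Bsum
  apply Finset.sum_eq_zero
  intro k hk
  rcases Nat.eq_zero_or_pos k with hk0 | hk0
  · subst hk0
    simp [S_zero_succ]
  · have hz : stirlingFirst (p + 1) (-1 + 1 - k) = 0 := S_neg _ (by omega)
    rw [hz, mul_zero]

lemma Bsum_rec (p r : ℕ) (t : ℤ) :
    Bsum p (r + 1) t = Bsum p r t - Bsum p r (t - 1) := by
  unfold Bsum
  rw [Finset.sum_range_succ' (fun k => (-1 : ℤ) ^ k * ((r+1).choose k : ℤ)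
    * stirlingFirst (p + 1) (t + 1 - k))]
  have hsplit : ∀ k ∈ Finset.range (r + 1),
      (-1 : ℤ) ^ (k+1) * ((r+1).choose (k+1) : ℤ) * stirlingFirst (p + 1) (t + 1 - ((k+1 : ℕ) : ℤ))
      = -((-1 : ℤ) ^ k * (r.choose k : ℤ) * stirlingFirst (p + 1) (t - 1 + 1 - k))
        + (-1 : ℤ) ^ (k+1) * (r.choose (k+1) : ℤ)
            * stirlingFirst (p + 1) (t + 1 - ((k+1 : ℕ) : ℤ)) := by
    intro k hk
    rw [Nat.choose_succ_succ]
    have harg : t + 1 - ((k+1 : ℕ) : ℤ) = t - 1 + 1 - k := by push_cast; ring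
    rw [harg]
    push_cast
    ring
  rw [Finset.sum_congr rfl hsplit, Finset.sum_add_distrib, Finset.sum_neg_distrib]
  simp only [Nat.choose_zero_right, Nat.cast_one, pow_zero, one_mul, mul_one]
  have h2 : (∑ k ∈ Finset.range (r + 1),
      (-1 : ℤ) ^ (k+1) * (r.choose (k+1) : ℤ) * stirlingFirst (p + 1) (t + 1 - ((k+1 : ℕ) : ℤ)))
      + stirlingFirst (p + 1) (t + 1 - ((0:ℕ) : ℤ))
      = ∑ k ∈ Finset.range (r + 1),
        (-1 : ℤ) ^ k * (r.choose k : ℤ) * stirlingFirst (p + 1) (t + 1 - k) := by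
    have hh := Finset.sum_range_succ' (fun k => (-1 : ℤ) ^ k * (r.choose k : ℤ)
      * stirlingFirst (p + 1) (t + 1 - k)) (r + 1)
    rw [Finset.sum_range_succ (fun k => (-1 : ℤ) ^ k * (r.choose k : ℤ)
      * stirlingFirst (p + 1) (t + 1 - k)) (r + 1)] at hh
    simp only [Nat.choose_succ_self, Nat.cast_zero, mul_zero, zero_mul, add_zero,
      Nat.choose_zero_right, Nat.cast_one, pow_zero, one_mul] at hh
    exact hh.symm
  linarith [h2]

/-- Base case `r = 0`. -/
lemma base (p : ℕ) : ∀ t : ℕ,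
    (∑ j ∈ Finset.range (p + 1),
      (-1 : ℤ) ^ j * ((t + j).choose t : ℤ) * stirlingFirst p ((t : ℤ) + j)) =
    stirlingFirst (p + 1) ((t : ℤ) + 1) := by
  induction p with
  | zero =>
    intro t
    have h1 : ((t : ℤ) + 1) = ((t + 1 : ℕ) : ℤ) := by push_cast; ring
    rw [h1, S_nat, show (0:ℕ)+1 = 1 from rfl, Finset.sum_range_one]
    simp only [pow_zero, Nat.add_zero, Nat.choose_self, Nat.cast_one,
      one_mul, Nat.cast_zero, add_zero]
    rw [S_nat]
    show (1 : Polynomial ℤ).coeff t = (descPochhammer ℤ 1).coeff (t + 1)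
    rw [descPochhammer_one, Polynomial.coeff_one, Polynomial.coeff_X]
    rcases Nat.eq_zero_or_pos t with ht | ht
    · subst ht; simp
    · have h2 : ¬ (t = 0) := by omega
      have h3 : ¬ (t + 1 = 1) := by omega
      simp [h2, h3]
  | succ p IH =>
    intro t
    have hA : ∑ j ∈ Finset.range (p + 2),
        (-1 : ℤ) ^ j * ((t + j).choose t : ℤ) * stirlingFirst p ((t : ℤ) + j)
        = stirlingFirst (p + 1) ((t : ℤ) + 1) := by
      rw [Finset.sum_range_succ]
      have hz : stirlingFirst p ((t : ℤ) + ((p + 1 : ℕ) : ℤ)) = 0 := S_gt p (by push_cast; omega)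
      rw [hz, mul_zero, add_zero, IH t]
    have hU : ∑ j ∈ Finset.range (p + 2),
        (-1 : ℤ) ^ j * ((t + j).choose t : ℤ) * stirlingFirst p ((t : ℤ) + j - 1)
        = stirlingFirst (p + 1) (t : ℤ) - stirlingFirst (p + 1) ((t : ℤ) + 1) := by
      rcases t with _ | u
      · -- t = 0
        rw [Finset.sum_range_succ' (fun j => (-1 : ℤ) ^ j * (((0 + j).choose 0 : ℕ) : ℤ)
          * stirlingFirst p (((0:ℕ) : ℤ) + j - 1)) (p + 1)]
        have hpeel : ∀ j ∈ Finset.range (p + 1),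
            (-1 : ℤ) ^ (j+1) * (((0 + (j+1)).choose 0 : ℕ) : ℤ)
              * stirlingFirst p (((0:ℕ) : ℤ) + ((j+1 : ℕ) : ℤ) - 1)
            = -((-1 : ℤ) ^ j * (((0 + j).choose 0 : ℕ) : ℤ)
              * stirlingFirst p (((0:ℕ) : ℤ) + j)) := by
          intro j hj
          have harg : ((0:ℕ) : ℤ) + ((j+1 : ℕ) : ℤ) - 1 = ((0:ℕ) : ℤ) + j := by push_cast; ring
          rw [harg]
          simp only [Nat.zero_add, Nat.choose_zero_right, Nat.cast_one, mul_one, pow_succ]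
          ring
        rw [Finset.sum_congr rfl hpeel, Finset.sum_neg_distrib]
        have hz0 : stirlingFirst p (((0:ℕ) : ℤ) + ((0:ℕ) : ℤ) - 1) = 0 := S_neg _ (by norm_num)
        rw [hz0, mul_zero, add_zero, IH 0]
        norm_num [S_zero_succ]
      · -- t = u + 1
        have hsplit : ∀ j ∈ Finset.range (p + 2),
            (-1 : ℤ) ^ j * (((u + 1 + j).choose (u + 1) : ℕ) : ℤ)
              * stirlingFirst p (((u+1 : ℕ) : ℤ) + j - 1)
            = (-1 : ℤ) ^ j * (((u + j).choose u : ℕ) : ℤ) * stirlingFirst p ((u : ℤ) + j)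
              + (-1 : ℤ) ^ j * (((u + j).choose (u + 1) : ℕ) : ℤ)
                * stirlingFirst p ((u : ℤ) + j) := by
          intro j hj
          have hch : (u + 1 + j).choose (u + 1) = (u + j).choose u + (u + j).choose (u + 1) := by
            have : u + 1 + j = (u + j) + 1 := by omega
            rw [this, Nat.choose_succ_succ]
          have harg : ((u+1 : ℕ) : ℤ) + j - 1 = (u : ℤ) + j := by push_cast; ring
          rw [hch, harg]
          push_cast
          ring
        rw [Finset.sum_congr rfl hsplit, Finset.sum_add_distrib]
        have hfirst : ∑ j ∈ Finset.range (p + 2),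
            (-1 : ℤ) ^ j * (((u + j).choose u : ℕ) : ℤ) * stirlingFirst p ((u : ℤ) + j)
            = stirlingFirst (p + 1) ((u : ℤ) + 1) := by
          rw [Finset.sum_range_succ]
          have hz : stirlingFirst p ((u : ℤ) + ((p + 1 : ℕ) : ℤ)) = 0 := S_gt p (by push_cast; omega)
          rw [hz, mul_zero, add_zero, IH u]
        have hsecond : ∑ j ∈ Finset.range (p + 2),
            (-1 : ℤ) ^ j * (((u + j).choose (u + 1) : ℕ) : ℤ) * stirlingFirst p ((u : ℤ) + j)
            = - stirlingFirst (p + 1) (((u+1 : ℕ) : ℤ) + 1) := by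
          rw [Finset.sum_range_succ' (fun j => (-1 : ℤ) ^ j * (((u + j).choose (u + 1) : ℕ) : ℤ)
            * stirlingFirst p ((u : ℤ) + j)) (p + 1)]
          have hpeel : ∀ j ∈ Finset.range (p + 1),
              (-1 : ℤ) ^ (j+1) * (((u + (j+1)).choose (u + 1) : ℕ) : ℤ)
                * stirlingFirst p ((u : ℤ) + ((j+1 : ℕ) : ℤ))
              = -((-1 : ℤ) ^ j * (((u + 1 + j).choose (u + 1) : ℕ) : ℤ)
                * stirlingFirst p (((u+1 : ℕ) : ℤ) + j)) := by
            intro j hj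
            have hch : u + (j + 1) = u + 1 + j := by omega
            have harg : (u : ℤ) + ((j+1 : ℕ) : ℤ) = ((u+1 : ℕ) : ℤ) + j := by push_cast; ring
            rw [hch, harg, pow_succ]
            ring
          rw [Finset.sum_congr rfl hpeel, Finset.sum_neg_distrib]
          have hz0 : (((u + 0).choose (u + 1) : ℕ) : ℤ) = 0 := by
            simp [Nat.choose_eq_zero_of_lt]
          rw [hz0]
          rw [IH (u + 1)]
          push_cast
          ring
        rw [hfirst, hsecond]
        push_cast
        ring
    -- assemble
    have hterm : ∀ j ∈ Finset.range (p + 2),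
        (-1 : ℤ) ^ j * ((t + j).choose t : ℤ) * stirlingFirst (p + 1) ((t : ℤ) + j)
        = ((-1 : ℤ) ^ j * ((t + j).choose t : ℤ) * stirlingFirst p ((t : ℤ) + j - 1))
          - (p : ℤ) * ((-1 : ℤ) ^ j * ((t + j).choose t : ℤ) * stirlingFirst p ((t : ℤ) + j)) := by
      intro j hj
      rw [S_rec p ((t : ℤ) + j)]
      ring
    rw [Finset.sum_congr rfl hterm, Finset.sum_sub_distrib, ← Finset.mul_sum, hU, hA]
    rw [S_rec (p + 1) ((t : ℤ) + 1)]
    have : (t : ℤ) + 1 - 1 = (t : ℤ) := by ring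
    rw [this]
    push_cast
    ring

lemma main (p r : ℕ) : ∀ t : ℕ, Asum p r t (p + r + 1) = (-1 : ℤ) ^ r * Bsum p r (t : ℤ) := by
  induction r with
  | zero =>
    intro t
    unfold Asum Bsum
    simp only [pow_zero, one_mul, Nat.cast_zero, sub_zero, Nat.add_zero, Nat.zero_add,
      Finset.sum_range_one, Nat.choose_zero_right, Nat.cast_one]
    exact base p t
  | succ r IH =>
    intro t
    unfold Asum
    rcases t with _ | u
    · -- t = 0
      have hpeel : ∀ j ∈ Finset.range (p + r + 1),
          (-1 : ℤ) ^ (j+1) * (((0 + (j+1)).choose 0 : ℕ) : ℤ)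
            * stirlingFirst p (((0:ℕ) : ℤ) + ((j+1 : ℕ) : ℤ) - ((r+1 : ℕ) : ℤ))
          = -((-1 : ℤ) ^ j * (((0 + j).choose 0 : ℕ) : ℤ)
            * stirlingFirst p (((0:ℕ) : ℤ) + j - r)) := by
        intro j hj
        have harg : ((0:ℕ) : ℤ) + ((j+1 : ℕ) : ℤ) - ((r+1 : ℕ) : ℤ) = ((0:ℕ) : ℤ) + j - r := by
          push_cast; ring
        rw [harg]
        simp only [Nat.zero_add, Nat.choose_zero_right, Nat.cast_one, mul_one, pow_succ]
        ring
      have hrange : p + (r + 1) + 1 = (p + r + 1) + 1 := by omega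
      rw [hrange]
      rw [Finset.sum_range_succ' (fun j => (-1 : ℤ) ^ j * (((0 + j).choose 0 : ℕ) : ℤ)
        * stirlingFirst p (((0:ℕ) : ℤ) + j - ((r+1 : ℕ) : ℤ))) (p + r + 1)]
      rw [Finset.sum_congr rfl hpeel, Finset.sum_neg_distrib]
      have hz0 : stirlingFirst p (((0:ℕ) : ℤ) + ((0:ℕ) : ℤ) - ((r+1 : ℕ) : ℤ)) = 0 :=
        S_neg _ (by push_cast; omega)
      rw [hz0, mul_zero, add_zero]
      have hIH := IH 0
      unfold Asum at hIH
      rw [hIH]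
      push_cast
      rw [Bsum_rec p r 0]
      rw [show (0 : ℤ) - 1 = -1 by ring, Bsum_neg_one]
      ring
    · -- t = u + 1
      have hsplit : ∀ j ∈ Finset.range (p + (r+1) + 1),
          (-1 : ℤ) ^ j * (((u + 1 + j).choose (u + 1) : ℕ) : ℤ)
            * stirlingFirst p (((u+1 : ℕ) : ℤ) + j - ((r+1 : ℕ) : ℤ))
          = (-1 : ℤ) ^ j * (((u + j).choose u : ℕ) : ℤ) * stirlingFirst p ((u : ℤ) + j - r)
            + (-1 : ℤ) ^ j * (((u + j).choose (u + 1) : ℕ) : ℤ)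
              * stirlingFirst p ((u : ℤ) + j - r) := by
        intro j hj
        have hch : (u + 1 + j).choose (u + 1) = (u + j).choose u + (u + j).choose (u + 1) := by
          have : u + 1 + j = (u + j) + 1 := by omega
          rw [this, Nat.choose_succ_succ]
        have harg : ((u+1 : ℕ) : ℤ) + j - ((r+1 : ℕ) : ℤ) = (u : ℤ) + j - r := by push_cast; ring
        rw [hch, harg]
        push_cast
        ring
      rw [Finset.sum_congr rfl hsplit, Finset.sum_add_distrib]
      have hfirst : ∑ j ∈ Finset.range (p + (r+1) + 1),
          (-1 : ℤ) ^ j * (((u + j).choose u : ℕ) : ℤ) * stirlingFirst p ((u : ℤ) + j - r)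
          = (-1 : ℤ) ^ r * Bsum p r (u : ℤ) := by
        have he : Asum p r u (p + (r+1) + 1) = Asum p r u (p + r + 1) :=
          Asum_ext p r u (by omega)
        have hIH := IH u
        unfold Asum at he hIH
        rw [he, hIH]
      have hsecond : ∑ j ∈ Finset.range (p + (r+1) + 1),
          (-1 : ℤ) ^ j * (((u + j).choose (u + 1) : ℕ) : ℤ) * stirlingFirst p ((u : ℤ) + j - r)
          = -((-1 : ℤ) ^ r * Bsum p r ((u+1 : ℕ) : ℤ)) := by
        have hrange : p + (r + 1) + 1 = (p + r + 1) + 1 := by omega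
        rw [hrange]
        rw [Finset.sum_range_succ' (fun j => (-1 : ℤ) ^ j * (((u + j).choose (u + 1) : ℕ) : ℤ)
          * stirlingFirst p ((u : ℤ) + j - r)) (p + r + 1)]
        have hpeel : ∀ j ∈ Finset.range (p + r + 1),
            (-1 : ℤ) ^ (j+1) * (((u + (j+1)).choose (u + 1) : ℕ) : ℤ)
              * stirlingFirst p ((u : ℤ) + ((j+1 : ℕ) : ℤ) - r)
            = -((-1 : ℤ) ^ j * (((u + 1 + j).choose (u + 1) : ℕ) : ℤ)
              * stirlingFirst p (((u+1 : ℕ) : ℤ) + j - r)) := by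
          intro j hj
          have hch : u + (j + 1) = u + 1 + j := by omega
          have harg : (u : ℤ) + ((j+1 : ℕ) : ℤ) - r = ((u+1 : ℕ) : ℤ) + j - r := by
            push_cast; ring
          rw [hch, harg, pow_succ]
          ring
        rw [Finset.sum_congr rfl hpeel, Finset.sum_neg_distrib]
        have hz0 : (((u + 0).choose (u + 1) : ℕ) : ℤ) = 0 := by
          simp [Nat.choose_eq_zero_of_lt]
        rw [hz0]
        have hIH := IH (u + 1)
        unfold Asum at hIH
        rw [hIH]
        push_cast
        ring
      rw [hfirst, hsecond]
      have hB := Bsum_rec p r ((u : ℤ) + 1)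
      have harg : (u : ℤ) + 1 - 1 = (u : ℤ) := by ring
      rw [harg] at hB
      push_cast
      rw [hB]
      ring

end Stmt11Aux

theorem stmt_11 (r i p : ℕ) (hi : 1 ≤ i) (hp : 1 ≤ p) :
    (∑ j ∈ Finset.range (p + r + 2),
        (-1 : ℤ) ^ j * Nat.choose (i + j - 1) (i - 1) *
          stirlingFirst p ((i : ℤ) + j - r - 1)) =
      (-1 : ℤ) ^ r * ∑ k ∈ Finset.range (r + 1),
        (-1 : ℤ) ^ k * Nat.choose r k * stirlingFirst (p + 1) ((i : ℤ) - k) := by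
  obtain ⟨t, rfl⟩ : ∃ t, i = t + 1 := ⟨i - 1, by omega⟩
  have hL : ∑ j ∈ Finset.range (p + r + 2),
      (-1 : ℤ) ^ j * Nat.choose (t + 1 + j - 1) (t + 1 - 1) *
        stirlingFirst p (((t + 1 : ℕ) : ℤ) + j - r - 1)
      = Stmt11Aux.Asum p r t (p + r + 2) := by
    unfold Stmt11Aux.Asum
    apply Finset.sum_congr rfl
    intro j hj
    have hch : t + 1 + j - 1 = t + j := by omega
    have hch2 : t + 1 - 1 = t := by omega
    have harg : ((t + 1 : ℕ) : ℤ) + j - r - 1 = (t : ℤ) + j - r := by push_cast; ring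
    rw [hch, hch2, harg]
  rw [hL, Stmt11Aux.Asum_ext p r t (by omega), Stmt11Aux.main p r t]
  unfold Stmt11Aux.Bsum
  congr 1
end

section
/- For indeterminates x, y and positive integers a, b: Σ over r,s,u,v ≥ 0 with r+s = a of (−1)^{u+v}·C(r,u)·C(s,v)·C(u+v, a−b)·(x+1)^{r−u}·(y+1)^{s−v} = (−1)^{a+b}·C(a+1, b+1)·(x^{b+1} − y^{b+1})/(x−y), as an identity of polynomials in x and y (the right side being the complete homogeneous polynomial Σ_{i+j=b} x^i y^j times (−1)^{a+b}C(a+1,b+1)). -/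
/-!
The left side is the coefficient of `T ^ (a - b)` in
`Q(T) = ∑_{r + s = a} (x - T) ^ r (y - T) ^ s`, as one sees by expanding each factor around
`T = -1`, i.e. `x - T = (x + 1) - (1 + T)`. Since
`Q(T) (x - y) = (x - T) ^ (a + 1) - (y - T) ^ (a + 1)`, comparing coefficients gives the right side
when `x ≠ y`. The case `x = y` follows by running this over `R[X]` with `x := X`, `y := C y` and
evaluating at `x`.
-/

/-- Binomial coefficient `C(m, k)` with integer lower index, zero for `k < 0`. -/
def chooseInt (m : ℕ) (k : ℤ) : ℤ := if 0 ≤ k then Nat.choose m k.toNat else 0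

open Polynomial Finset

namespace Polynomial
variable {R : Type*} [CommRing R]

theorem coeff_C_sub_X_pow (x : R) (n k : ℕ) :
    ((C x - X) ^ n).coeff k = (-1) ^ k * n.choose k * x ^ (n - k) := by
  have hneg : (C x - X : R[X]) = C (-1) * (X + C (-x)) := by simp only [map_neg, map_one]; ring
  rw [hneg, mul_pow, ← C_pow, coeff_C_mul, coeff_X_add_C_pow]
  rcases le_or_gt k n with hkn | hnk
  · obtain ⟨j, rfl⟩ := Nat.exists_eq_add_of_le hkn
    have hsq : (-1 : R) ^ j * (-1) ^ j = 1 := by rw [← mul_pow, neg_one_mul, neg_neg, one_pow]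
    rw [Nat.add_sub_cancel_left, neg_pow x, pow_add]
    linear_combination ((-1) ^ k * ((k + j).choose k : R) * x ^ j) * hsq
  · simp [Nat.choose_eq_zero_of_lt hnk]

theorem coeff_C_sub_X_pow_mul_C_sub_X_pow (x y : R) (r s k : ℕ) :
    ((C x - X) ^ r * (C y - X) ^ s).coeff k =
      ∑ u ∈ range (r + 1), ∑ v ∈ range (s + 1),
        (-1) ^ (u + v) * r.choose u * s.choose v * (u + v).choose k *
          (x + 1) ^ (r - u) * (y + 1) ^ (s - v) := by
  have hshift : ∀ z : R, C z - X = C (-1) * (1 + X) + C (z + 1) := fun z => by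
    rw [C_add, C_neg, C_1]; ring
  rw [hshift, hshift, add_pow, add_pow, sum_mul_sum, finsetSum_coeff]
  refine sum_congr rfl fun u _ => ?_
  rw [finsetSum_coeff]
  refine sum_congr rfl fun v _ => ?_
  have hterm : (C (-1) * (1 + X)) ^ u * C (x + 1) ^ (r - u) * (r.choose u : R[X]) *
        ((C (-1) * (1 + X)) ^ v * C (y + 1) ^ (s - v) * (s.choose v : R[X])) =
      C ((-1) ^ (u + v) * r.choose u * s.choose v * (x + 1) ^ (r - u) * (y + 1) ^ (s - v)) *
        (1 + X) ^ (u + v) := by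
    simp only [mul_pow, C_mul, C_pow, ← C_eq_natCast]
    ring
  rw [hterm, coeff_C_mul, coeff_one_add_X_pow]
  ring

theorem coeff_sum_C_sub_X_pow_mul_C_sub_X_pow_of_ne [IsDomain R] {x y : R} (hxy : x ≠ y)
    (a k : ℕ) :
    (∑ r ∈ range (a + 1), (C x - X) ^ r * (C y - X) ^ (a - r)).coeff k =
      (-1) ^ k * (a + 1).choose k * ∑ i ∈ range (a + 1 - k), x ^ i * y ^ (a - k - i) := by
  refine mul_right_cancel₀ (sub_ne_zero.mpr hxy) ?_
  have hQ := geom_sum₂_mul (C x - X) (C y - X) (a + 1)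
  have hh := geom_sum₂_mul x y (a + 1 - k)
  simp only [sub_sub_sub_cancel_right, ← C_sub, Nat.add_sub_cancel] at hQ
  rw [show a + 1 - k - 1 = a - k by omega] at hh
  rw [← coeff_mul_C, hQ, coeff_sub, coeff_C_sub_X_pow, coeff_C_sub_X_pow]
  linear_combination (-(-1) ^ k * ((a + 1).choose k : R)) * hh

theorem coeff_sum_C_sub_X_pow_mul_C_sub_X_pow [IsDomain R] (x y : R) (a k : ℕ) :
    (∑ r ∈ range (a + 1), (C x - X) ^ r * (C y - X) ^ (a - r)).coeff k =
      (-1) ^ k * (a + 1).choose k * ∑ i ∈ range (a + 1 - k), x ^ i * y ^ (a - k - i) := by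
  have h := congrArg (evalRingHom x) (coeff_sum_C_sub_X_pow_mul_C_sub_X_pow_of_ne (X_ne_C y) a k)
  rw [← coeff_map] at h
  simpa [Polynomial.map_sum, eval_finsetSum] using h

end Polynomial

theorem stmt_12_general (a b : ℕ) (x y : ℂ) :
    (∑ r ∈ Finset.range (a + 1), ∑ u ∈ Finset.range (r + 1),
        ∑ v ∈ Finset.range (a - r + 1),
          (-1 : ℂ) ^ (u + v) * Nat.choose r u * Nat.choose (a - r) v *
            (chooseInt (u + v) ((a : ℤ) - b) : ℂ) *
            (x + 1) ^ (r - u) * (y + 1) ^ (a - r - v)) =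
      (-1 : ℂ) ^ (a + b) * Nat.choose (a + 1) (b + 1) *
        ∑ i ∈ Finset.range (b + 1), x ^ i * y ^ (b - i) := by
  rcases lt_or_ge a b with hab | hba
  · have hchoose (m : ℕ) : chooseInt m ((a : ℤ) - b) = 0 := if_neg (by omega)
    simp [hchoose, Nat.choose_eq_zero_of_lt (by omega : a + 1 < b + 1)]
  · obtain ⟨k, rfl⟩ := Nat.exists_eq_add_of_le hba
    have hchoose (m : ℕ) : (chooseInt m ((b + k : ℕ) - b : ℤ) : ℂ) = m.choose k := by
      simp [chooseInt]
    simp only [hchoose, ← coeff_C_sub_X_pow_mul_C_sub_X_pow, ← finsetSum_coeff,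
      coeff_sum_C_sub_X_pow_mul_C_sub_X_pow]
    rw [show b + k + 1 - k = b + 1 by omega, Nat.add_sub_cancel,
      show b + k + 1 = k + (b + 1) by ring, Nat.choose_symm_add,
      show b + k + b = k + 2 * b by ring, pow_add, pow_mul, neg_one_sq, one_pow, mul_one]

theorem stmt_12 (a b : ℕ) (ha : 1 ≤ a) (hb : 1 ≤ b) (x y : ℂ) :
    (∑ r ∈ Finset.range (a + 1), ∑ u ∈ Finset.range (r + 1),
        ∑ v ∈ Finset.range (a - r + 1),
          (-1 : ℂ) ^ (u + v) * Nat.choose r u * Nat.choose (a - r) v *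
            (chooseInt (u + v) ((a : ℤ) - b) : ℂ) *
            (x + 1) ^ (r - u) * (y + 1) ^ (a - r - v)) =
      (-1 : ℂ) ^ (a + b) * Nat.choose (a + 1) (b + 1) *
        ∑ i ∈ Finset.range (b + 1), x ^ i * y ^ (b - i) :=
  stmt_12_general a b x y
end

section
/- Two-variable binomial convolution: for integers a ≥ 0, b with 0 ≤ a−b, and indeterminates x, y: Σ over r,s,k,l ≥ 0 with r+s = a and k+l = a−b of C(r,k)·C(s,l)·x^{r−k}·y^{s−l} = C(a+1, b+1)·Σ_{i=0}^{b} x^i y^{b−i}, as polynomials in x and y. -/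
lemma key14 (j : ℕ) : ∀ i m : ℕ,
    ∑ k ∈ Finset.range (m+1), (k+i).choose i * (m-k+j).choose j
      = (m+i+j+1).choose (i+j+1) := by
  intro i
  induction i with
  | zero =>
    intro m
    have e1 : ∀ k ∈ Finset.range (m+1),
        (k+0).choose 0 * (m-k+j).choose j = (m-k+j).choose j := by
      intro k _; simp
    rw [Finset.sum_congr rfl e1]
    have := Finset.sum_range_reflect (fun k => (k+j).choose j) (m+1)
    calc ∑ k ∈ Finset.range (m+1), (m-k+j).choose j
        = ∑ k ∈ Finset.range (m+1), (k+j).choose j := by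
          rw [← this]
          apply Finset.sum_congr rfl
          intro k hk
          simp only [Finset.mem_range] at hk
          rw [show m+1-1-k = m-k from by omega]
      _ = (m+j+1).choose (j+1) := Nat.sum_range_add_choose m j
      _ = (m+0+j+1).choose (0+j+1) := by rw [show m+0+j+1 = m+j+1 from by omega,
            show 0+j+1 = j+1 from by omega]
  | succ i ih =>
    intro m
    induction m with
    | zero => simp
    | succ m ihm =>
      rw [Finset.sum_range_succ']
      have h1 : ∀ k ∈ Finset.range (m+1),
          (k+1+(i+1)).choose (i+1) * (m+1-(k+1)+j).choose j
            = (k+(i+1)).choose (i+1) * (m-k+j).choose j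
              + ((k+1)+i).choose i * (m-k+j).choose j := by
        intro k hk
        rw [show m+1-(k+1) = m-k from by omega,
          show k+1+(i+1) = (k+(i+1))+1 from by omega, Nat.choose_succ_succ',
          show k+(i+1) = k+1+i from by omega, add_mul]
        ring
      rw [Finset.sum_congr rfl h1, Finset.sum_add_distrib]
      have h2 : ∑ k ∈ Finset.range (m+1), ((k+1)+i).choose i * (m-k+j).choose j
          + ((0:ℕ)+(i+1)).choose (i+1) * (m+1-0+j).choose j
            = (m+1+i+j+1).choose (i+j+1) := by
        have hih := ih (m+1)
        rw [Finset.sum_range_succ'] at hih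
        have e2 : ∀ k ∈ Finset.range (m+1),
            (k+1+i).choose i * (m+1-(k+1)+j).choose j
              = (k+1+i).choose i * (m-k+j).choose j := by
          intro k hk
          rw [show m+1-(k+1) = m-k from by omega]
        rw [Finset.sum_congr rfl e2] at hih
        rw [← hih]
        congr 1
        simp
      have c1 : (m+(i+1)+j+1).choose (i+1+j+1) = (m+i+j+2).choose (i+j+2) := by
        congr 1 <;> omega
      have c2 : (m+1+i+j+1).choose (i+j+1) = (m+i+j+2).choose (i+j+1) := by
        congr 1 <;> omega
      have c3 : (m+1+(i+1)+j+1).choose (i+1+j+1) = (m+i+j+2+1).choose (i+j+1+1) := by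
        congr 1 <;> omega
      have c5 : (m+i+j+2).choose (i+j+1+1) = (m+i+j+2).choose (i+j+2) := by
        congr 1 <;> omega
      have pas : (m+i+j+2+1).choose (i+j+1+1)
          = (m+i+j+2).choose (i+j+1) + (m+i+j+2).choose (i+j+1+1) :=
        Nat.choose_succ_succ _ _
      rw [add_assoc, h2, ihm, c1, c2, c3, pas, c5]
      ring

theorem stmt_14 (a b : ℕ) (hb : b ≤ a) (x y : ℂ) :
    (∑ r ∈ Finset.range (a + 1), ∑ k ∈ Finset.range (a - b + 1),
        (Nat.choose r k : ℂ) * Nat.choose (a - r) (a - b - k) *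
          x ^ (r - k) * y ^ ((a - r) - (a - b - k))) =
      (Nat.choose (a + 1) (b + 1) : ℂ) * ∑ i ∈ Finset.range (b + 1), x ^ i * y ^ (b - i) := by
  obtain ⟨m, rfl⟩ := Nat.exists_eq_add_of_le hb
  rw [show b + m - b = m from by omega, Finset.sum_comm]
  have step1 : ∀ k ∈ Finset.range (m+1),
      (∑ r ∈ Finset.range (b+m+1), (Nat.choose r k : ℂ) * Nat.choose (b+m-r) (m-k) *
          x ^ (r-k) * y ^ ((b+m-r) - (m-k)))
        = ∑ i ∈ Finset.range (b+1),
            ((k+i).choose i : ℂ) * ((m-k+(b-i)).choose (b-i)) * x^i * y^(b-i) := by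
    intro k hk
    simp only [Finset.mem_range] at hk
    have hkm : k ≤ m := by omega
    have hsub : Finset.Icc k (k+b) ⊆ Finset.range (b+m+1) := by
      intro r hr
      simp only [Finset.mem_Icc] at hr
      simp only [Finset.mem_range]
      omega
    have hzero : ∀ r ∈ Finset.range (b+m+1), r ∉ Finset.Icc k (k+b) →
        (Nat.choose r k : ℂ) * Nat.choose (b+m-r) (m-k) *
          x ^ (r-k) * y ^ ((b+m-r) - (m-k)) = 0 := by
      intro r hr hnr
      simp only [Finset.mem_range] at hr
      simp only [Finset.mem_Icc, not_and_or, not_le] at hnr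
      rcases hnr with h | h
      · rw [Nat.choose_eq_zero_of_lt h]
        simp
      · rw [Nat.choose_eq_zero_of_lt (show b+m-r < m-k from by omega)]
        simp
    rw [← Finset.sum_subset hsub hzero, ← Finset.Ico_add_one_right_eq_Icc,
      Finset.sum_Ico_eq_sum_range, show k+b+1-k = b+1 from by omega]
    apply Finset.sum_congr rfl
    intro i hi
    simp only [Finset.mem_range] at hi
    have hib : i ≤ b := by omega
    rw [show k+i-k = i from by omega,
      show b+m-(k+i) = (m-k)+(b-i) from by omega,
      show (m-k)+(b-i) - (m-k) = b-i from by omega,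
      Nat.choose_symm_add, Nat.choose_symm_add]
  rw [Finset.sum_congr rfl step1, Finset.sum_comm, Finset.mul_sum]
  apply Finset.sum_congr rfl
  intro i hi
  simp only [Finset.mem_range] at hi
  have hib : i ≤ b := by omega
  have hkey := key14 (b-i) i m
  have hc : (m+i+(b-i)+1).choose (i+(b-i)+1) = (b+m+1).choose (b+1) := by
    congr 1 <;> omega
  rw [hc] at hkey
  calc ∑ k ∈ Finset.range (m+1),
        ((k+i).choose i : ℂ) * ((m-k+(b-i)).choose (b-i)) * x^i * y^(b-i)
      = (∑ k ∈ Finset.range (m+1),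
          ((k+i).choose i * ((m-k+(b-i)).choose (b-i)) : ℕ) : ℂ) * (x^i * y^(b-i)) := by
        push_cast
        rw [Finset.sum_mul]
        apply Finset.sum_congr rfl
        intro k _
        ring
    _ = ((b+m+1).choose (b+1) : ℂ) * (x^i * y^(b-i)) := by rw [← Nat.cast_sum, hkey]
end

section
/- Murnaghan recurrence for characters: let λ, μ be partitions of n, let p be a part of μ, and μ∖p the partition obtained by deleting one part p from μ. Then χ^λ_μ = Σ_{k=1}^{ℓ(λ)} χ^{λ − p·ε_k}_{μ∖p}, where χ^{λ−p·ε_k} denotes the virtual character of S_{n−p} attached to the integer sequence (λ_1,…,λ_{k−1}, λ_k − p, λ_{k+1},…,λ_{ℓ(λ)}) via the Jacobi–Trudi determinant. -/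
/-!
Multiplying by a power sum `p_r = ∑ i, x_i ^ r` shifts exponents: the coefficient of `x^e` in
`F * p_r` is the sum over `i` of the coefficients of `x^(e - r ε_i)` in `F`. Applied to the
Frobenius formula for `χ^α_μ`, with `r` the deleted part of `μ`, this is the Pieri-type rule
`p_r s_α = ∑ i, s_{α + r ε_i}` read off on characters.
-/

open MvPolynomial

/-- The virtual character `χ^α_μ` attached to an integer sequence `α ∈ ℤ^l`
(via the Jacobi–Trudi determinant / Frobenius expansion), realized through the
Frobenius coefficient formula: the coefficient of `x^{α+δ}` in the product of
the Vandermonde alternant with the power sums `∏_k p_{μ_k}`, zero when some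
exponent `α_i + l - i` is negative. -/
noncomputable def chiVirt (l : ℕ) (a : ℕ → ℤ) (mu : List ℕ) : ℤ :=
  if ∀ i : Fin l, 0 ≤ a ((i : ℕ) + 1) + ((l : ℤ) - 1 - (i : ℕ)) then
    MvPolynomial.coeff
      (Finsupp.equivFunOnFinite.symm fun i : Fin l =>
        (a ((i : ℕ) + 1) + ((l : ℤ) - 1 - (i : ℕ))).toNat)
      ((∏ p ∈ Finset.univ.filter (fun p : Fin l × Fin l => p.1 < p.2),
          (MvPolynomial.X p.1 - MvPolynomial.X p.2 : MvPolynomial (Fin l) ℤ)) *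
        (mu.map fun k => ∑ i : Fin l, (MvPolynomial.X i : MvPolynomial (Fin l) ℤ) ^ k).prod)
  else 0

namespace MvPolynomial

variable {σ R : Type*} [Fintype σ] [CommSemiring R]

noncomputable def coeffInt (e : σ → ℤ) (F : MvPolynomial σ R) : R :=
  if ∀ i, 0 ≤ e i then coeff (Finsupp.equivFunOnFinite.symm fun i => (e i).toNat) F else 0

theorem coeffInt_natCast (m : σ →₀ ℕ) (F : MvPolynomial σ R) :
    coeffInt (fun j => (m j : ℤ)) F = coeff m F := by
  rw [coeffInt, if_pos fun j => Int.natCast_nonneg _]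
  congr 1
  ext j
  simp

theorem coeffInt_natCast_sub_single [DecidableEq σ] (m : σ →₀ ℕ) (i : σ) (r : ℕ)
    (F : MvPolynomial σ R) :
    coeffInt ((fun j => (m j : ℤ)) - Pi.single i (r : ℤ)) F =
      if Finsupp.single i r ≤ m then coeff (m - Finsupp.single i r) F else 0 := by
  split_ifs with hle
  · convert coeffInt_natCast (m - Finsupp.single i r) F using 2
    ext j
    rcases eq_or_ne j i with rfl | hji
    · have := Finsupp.single_le_iff.mp hle
      simp only [Pi.sub_apply, Pi.single_eq_same, Finsupp.coe_tsub, Finsupp.single_eq_same]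
      omega
    · simp [Pi.single_eq_of_ne hji, Finsupp.single_eq_of_ne hji]
  · refine if_neg fun h => hle (Finsupp.single_le_iff.mpr ?_)
    have := h i
    simp only [Pi.sub_apply, Pi.single_eq_same] at this
    omega

theorem coeff_mul_sum_X_pow [DecidableEq σ] (F : MvPolynomial σ R) (r : ℕ) (m : σ →₀ ℕ) :
    coeff m (F * ∑ i, X i ^ r) =
      ∑ i, if Finsupp.single i r ≤ m then coeff (m - Finsupp.single i r) F else 0 := by
  rw [Finset.mul_sum, coeff_sum]
  refine Finset.sum_congr rfl fun i _ => ?_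
  rw [X_pow_eq_monomial, coeff_mul_monomial']
  split <;> simp

theorem coeffInt_mul_sum_X_pow [DecidableEq σ] (F : MvPolynomial σ R) (r : ℕ) (e : σ → ℤ) :
    coeffInt e (F * ∑ i, X i ^ r) = ∑ i, coeffInt (e - Pi.single i (r : ℤ)) F := by
  by_cases he : ∀ j, 0 ≤ e j
  · obtain ⟨m, rfl⟩ : ∃ m : σ →₀ ℕ, e = fun j => (m j : ℤ) :=
      ⟨Finsupp.equivFunOnFinite.symm fun j => (e j).toNat, by ext j; simp [he j]⟩
    simp only [coeffInt_natCast, coeff_mul_sum_X_pow, coeffInt_natCast_sub_single]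
  · -- a negative exponent stays negative when another one is lowered
    obtain ⟨j, hj⟩ := not_forall.mp he
    rw [coeffInt, if_neg he]
    refine (Finset.sum_eq_zero fun i _ => if_neg fun h => hj ?_).symm
    have := h j
    rcases eq_or_ne j i with rfl | hji
    · simp only [Pi.sub_apply, Pi.single_eq_same] at this; omega
    · simpa [hji] using this

end MvPolynomial

/-- The exponent vector `α + δ`, `δ = (l - 1, …, 1, 0)`, of the Frobenius formula for
`chiVirt l α`. -/
def frobeniusExponent (l : ℕ) (a : ℕ → ℤ) (i : Fin l) : ℤ :=
  a ((i : ℕ) + 1) + ((l : ℤ) - 1 - (i : ℕ))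

noncomputable def powerSumProd (l : ℕ) (mu : List ℕ) : MvPolynomial (Fin l) ℤ :=
  (mu.map fun k => ∑ i : Fin l, (X i : MvPolynomial (Fin l) ℤ) ^ k).prod

theorem powerSumProd_eq_mul_erase (l : ℕ) {mu : List ℕ} {p : ℕ} (hp : p ∈ mu) :
    powerSumProd l mu = powerSumProd l (mu.erase p) * ∑ i : Fin l, X i ^ p := by
  rw [powerSumProd, powerSumProd, mul_comm, ← List.prod_cons]
  exact ((List.perm_cons_erase hp).map _).prod_eq

theorem chiVirt_eq_coeffInt (l : ℕ) (a : ℕ → ℤ) (mu : List ℕ) :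
    chiVirt l a mu = coeffInt (frobeniusExponent l a)
      ((∏ q ∈ Finset.univ.filter (fun q : Fin l × Fin l => q.1 < q.2), (X q.1 - X q.2)) *
        powerSumProd l mu) := by
  unfold chiVirt coeffInt
  congr 1

theorem frobeniusExponent_sub_at (l : ℕ) (a : ℕ → ℤ) (r : ℕ) (i : Fin l) :
    frobeniusExponent l (fun j => if j = (i : ℕ) + 1 then a j - r else a j) =
      frobeniusExponent l a - Pi.single i (r : ℤ) := by
  ext j
  rcases eq_or_ne j i with rfl | hji
  · simp [frobeniusExponent]; ring
  · simp [frobeniusExponent, hji, Fin.val_ne_of_ne hji]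

theorem sum_Icc_one_eq_sum_fin {M : Type*} [AddCommMonoid M] (l : ℕ) (g : ℕ → M) :
    ∑ k ∈ Finset.Icc 1 l, g k = ∑ i : Fin l, g (i + 1) := by
  rw [Fin.sum_univ_eq_sum_range (fun i => g (i + 1)), Finset.range_eq_Ico, Finset.sum_Ico_add' g]
  rfl

theorem chiVirt_eq_sum_erase (l : ℕ) (a : ℕ → ℤ) {mu : List ℕ} {p : ℕ} (hp : p ∈ mu) :
    chiVirt l a mu =
      ∑ k ∈ Finset.Icc 1 l, chiVirt l (fun i => if i = k then a i - p else a i) (mu.erase p) := by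
  rw [sum_Icc_one_eq_sum_fin, chiVirt_eq_coeffInt, powerSumProd_eq_mul_erase l hp, ← mul_assoc,
    coeffInt_mul_sum_X_pow]
  simp only [chiVirt_eq_coeffInt, frobeniusExponent_sub_at]

theorem stmt_17_general (l : ℕ) (lam : ℕ → ℕ)
    (mu : List ℕ)
    (p : ℕ) (hp : p ∈ mu) :
    chiVirt l (fun i => (lam i : ℤ)) mu =
      ∑ k ∈ Finset.Icc 1 l,
        chiVirt l (fun i => if i = k then (lam i : ℤ) - p else (lam i : ℤ)) (mu.erase p) :=
  chiVirt_eq_sum_erase l _ hp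

theorem stmt_17 (n l : ℕ) (lam : ℕ → ℕ)
    (hmono : ∀ i j, 1 ≤ i → i ≤ j → j ≤ l → lam j ≤ lam i)
    (hpos : ∀ i, 1 ≤ i → i ≤ l → 1 ≤ lam i)
    (hsum : ∑ i ∈ Finset.Icc 1 l, lam i = n)
    (mu : List ℕ) (hmu1 : ∀ x ∈ mu, 1 ≤ x) (hmusum : mu.sum = n)
    (p : ℕ) (hp : p ∈ mu) :
    chiVirt l (fun i => (lam i : ℤ)) mu =
      ∑ k ∈ Finset.Icc 1 l,
        chiVirt l (fun i => if i = k then (lam i : ℤ) - p else (lam i : ℤ)) (mu.erase p) :=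
  stmt_17_general l lam mu p hp
end

section
/- Generating function for second elementary symmetric function of Jucys–Murphy elements: in the center of the group algebra of S_n, e_2(J_1,…,J_n) = Σ_{μ : |μ|−ℓ(μ)=2} C_μ, i.e. e_2(J_1,…,J_n) equals the sum of the conjugacy class sums of all 3-cycles and of all products of two disjoint transpositions. -/
/-!
Expanding `Σ_{i<j} J_i J_j` gives the sum of `(a i)(c j)` over `a < i < j`, `c < j`, and each
such product has cycle type `(3)` or `(2,2)`. Conversely every `σ` of one of these types arises
from exactly one quadruple: `j` must be the largest point moved by `σ` and `c = σ⁻¹ j`, and then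
`σ (c j)` is an odd permutation moving at most three points below `j`, i.e. a transposition `(a i)`.
-/

/-- The Jucys–Murphy element `J_i = Σ_{j<i} (j i)` in the group algebra `ℂ[S_n]`. -/
noncomputable def JM (n : ℕ) (i : Fin n) : MonoidAlgebra ℂ (Equiv.Perm (Fin n)) :=
  ∑ j ∈ Finset.univ.filter (fun j : Fin n => j < i),
    MonoidAlgebra.single (Equiv.swap j i) (1 : ℂ)

open Finset

namespace Equiv.Perm

section DecidableEq

variable {α : Type*} [DecidableEq α]

theorem cycleType_sum_sub_card_swap_mul_swap [Fintype α] {a i c j : α} (hai : a ≠ i)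
    (hcj : c ≠ j) (haj : a ≠ j) (hij : i ≠ j) :
    (swap a i * swap c j).cycleType.sum - Multiset.card (swap a i * swap c j).cycleType = 2 := by
  by_cases hca : c = a
  · subst hca
    rw [(isThreeCycle_swap_mul_swap_same hai haj hij).cycleType]; rfl
  by_cases hci : c = i
  · subst hci
    rw [swap_comm, (isThreeCycle_swap_mul_swap_same hai.symm hij haj).cycleType]; rfl
  have hd : Disjoint (swap a i) (swap c j) := by
    rw [disjoint_iff_disjoint_support, support_swap hai, support_swap hcj]
    simp [hca, hci, haj.symm, hij.symm]
  rw [hd.cycleType_mul, (isCycle_swap hai).cycleType, (isCycle_swap hcj).cycleType,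
    support_swap hai, support_swap hcj, card_pair hai, card_pair hcj]
  rfl

theorem support_mul_swap_inv_self_subset [Fintype α] (σ : Perm α) (j : α) :
    (σ * swap (σ⁻¹ j) j).support ⊆ σ.support.erase j := by
  intro x hx
  rw [mem_support] at hx
  refine mem_erase.mpr ⟨?_, mem_support.mpr fun hσx => hx ?_⟩
  · rintro rfl
    exact hx (by simp)
  · have hxj : x ≠ j := by rintro rfl; exact hx (by simp)
    have hxc : x ≠ σ⁻¹ j := fun h => hxj (by rw [← hσx, h]; simp)
    rw [mul_apply, swap_apply_of_ne_of_ne hxc hxj, hσx]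

theorem isSwap_of_card_support_le_three_of_sign_eq_neg_one [Fintype α] {τ : Perm α}
    (hcard : #τ.support ≤ 3) (hsign : sign τ = -1) : IsSwap τ := by
  interval_cases h : #τ.support
  · rw [card_eq_zero, support_eq_empty_iff] at h
    simp [h] at hsign
  · exact absurd h (card_support_ne_one τ)
  · exact card_support_eq_two.mp h
  · rw [(card_support_eq_three_iff.mp h).sign] at hsign
    exact absurd hsign (by decide)

theorem two_mul_card_cycleType_le_sum [Fintype α] (σ : Perm α) :
    2 * Multiset.card σ.cycleType ≤ σ.cycleType.sum := by
  rw [mul_comm, ← smul_eq_mul]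
  exact Multiset.card_nsmul_le_sum fun _ => two_le_of_mem_cycleType

theorem sign_eq_one_of_cycleType_sum_sub_card_eq_two [Fintype α] {σ : Perm α}
    (h : σ.cycleType.sum - Multiset.card σ.cycleType = 2) : sign σ = 1 := by
  have := two_mul_card_cycleType_le_sum σ
  rw [sign_of_cycleType, show σ.cycleType.sum + Multiset.card σ.cycleType =
    2 * (Multiset.card σ.cycleType + 1) by omega, pow_mul, neg_one_sq, one_pow]

end DecidableEq

section LinearOrder

variable {α : Type*} [LinearOrder α]

theorem mul_swap_apply_top {τ : Perm α} {c j : α} (hcj : c < j) (hτ : ∀ k, j ≤ k → τ k = k) :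
    (τ * swap c j) j ≠ j ∧ ∀ k, j < k → (τ * swap c j) k = k := by
  refine ⟨fun h => hcj.ne (τ.injective ?_), fun k hk => ?_⟩
  · rwa [mul_apply, swap_apply_right, ← hτ j le_rfl] at h
  · rw [mul_apply, swap_apply_of_ne_of_ne (hcj.trans hk).ne' hk.ne', hτ k hk.le]

theorem eq_of_mul_swap_eq_mul_swap {τ τ' : Perm α} {c j c' j' : α} (hcj : c < j)
    (hcj' : c' < j') (hτ : ∀ k, j ≤ k → τ k = k) (hτ' : ∀ k, j' ≤ k → τ' k = k)
    (h : τ * swap c j = τ' * swap c' j') : c = c' ∧ j = j' ∧ τ = τ' := by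
  have top := mul_swap_apply_top hcj hτ
  have top' := mul_swap_apply_top hcj' hτ'
  rw [h] at top
  obtain rfl : j = j' := le_antisymm (not_lt.mp fun hlt => top.1 (top'.2 j hlt))
    (not_lt.mp fun hlt => top'.1 (top.2 j' hlt))
  have hc : ∀ {σ : Perm α} {c : α}, (∀ k, j ≤ k → σ k = k) → (σ * swap c j) c = j :=
    fun hσ => by rw [mul_apply, swap_apply_left, hσ _ le_rfl]
  obtain rfl : c = c' := (τ * swap c j).injective (by rw [hc hτ, h, hc hτ'])
  exact ⟨rfl, rfl, mul_right_cancel h⟩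

theorem eq_of_swap_mul_swap_eq {a i c j a' i' c' j' : α} (hai : a < i) (hcj : c < j)
    (hij : i < j) (hai' : a' < i') (hcj' : c' < j') (hij' : i' < j')
    (h : swap a i * swap c j = swap a' i' * swap c' j') :
    a = a' ∧ i = i' ∧ c = c' ∧ j = j' := by
  have below : ∀ {a i j : α}, a < i → i < j → ∀ k, j ≤ k → swap a i k = k :=
    fun hai hij k hk => swap_apply_of_ne_of_ne (hai.trans_le (hij.le.trans hk)).ne'
      (hij.trans_le hk).ne'
  obtain ⟨rfl, rfl, hs⟩ := eq_of_mul_swap_eq_mul_swap hcj hcj' (below hai hij)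
    (below hai' hij') h
  obtain ⟨rfl, rfl, -⟩ := eq_of_mul_swap_eq_mul_swap (τ := 1) (τ' := 1) hai hai'
    (fun _ _ => rfl) (fun _ _ => rfl) (by simpa using hs)
  exact ⟨rfl, rfl, rfl, rfl⟩

theorem exists_lt_swap_eq {x y : α} (hxy : x ≠ y) : ∃ a i, a < i ∧ swap x y = swap a i := by
  rcases hxy.lt_or_gt with h | h
  · exact ⟨x, y, h, rfl⟩
  · exact ⟨y, x, h, swap_comm x y⟩

theorem exists_swap_mul_swap_of_cycleType_sum_sub_card_eq_two [Fintype α] {σ : Perm α}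
    (h : σ.cycleType.sum - Multiset.card σ.cycleType = 2) :
    ∃ a i c j, a < i ∧ c < j ∧ i < j ∧ swap a i * swap c j = σ := by
  have hne : σ.support.Nonempty := by
    rw [nonempty_iff_ne_empty, Ne, support_eq_empty_iff]
    rintro rfl
    simp at h
  set j := σ.support.max' hne
  set c := σ⁻¹ j
  have hjσ : j ∈ σ.support := max'_mem _ hne
  have hcj : c ≠ j := fun hc => mem_support.mp hjσ (inv_eq_iff_eq.mp hc).symm
  have hcσ : c ∈ σ.support := mem_support.mpr (by simpa [c] using hcj.symm)
  have hτ : #(σ * swap c j).support ≤ 3 := by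
    have := two_mul_card_cycleType_le_sum σ
    grw [support_mul_swap_inv_self_subset, card_erase_of_mem hjσ, ← sum_cycleType]
    omega
  have hsign : sign (σ * swap c j) = -1 := by
    rw [sign_mul, sign_swap hcj, sign_eq_one_of_cycleType_sum_sub_card_eq_two h, one_mul]
  obtain ⟨x, y, hxy, hxyτ⟩ := isSwap_of_card_support_le_three_of_sign_eq_neg_one hτ hsign
  obtain ⟨a, i, hai, hswap⟩ := exists_lt_swap_eq hxy
  rw [hswap] at hxyτ
  have hiσ : i ∈ σ.support.erase j := support_mul_swap_inv_self_subset σ j <| by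
    change i ∈ (σ * swap c j).support
    simp [hxyτ, support_swap hai.ne]
  refine ⟨a, i, c, j, hai, (le_max' _ _ hcσ).lt_of_ne hcj,
    (le_max' _ _ (mem_of_mem_erase hiσ)).lt_of_ne (ne_of_mem_erase hiσ), ?_⟩
  rw [← hxyτ, mul_swap_mul_self]

end LinearOrder

end Equiv.Perm

open Equiv Equiv.Perm MonoidAlgebra

theorem sum_JM_mul_JM (n : ℕ) :
    ∑ p ∈ univ.filter (fun p : Fin n × Fin n => p.1 < p.2), JM n p.1 * JM n p.2 =
      ∑ q ∈ univ.filter (fun q : (Fin n × Fin n) × (Fin n × Fin n) =>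
          q.1.1 < q.1.2 ∧ q.2.1 < q.1.1 ∧ q.2.2 < q.1.2),
        single (swap q.2.1 q.1.1 * swap q.2.2 q.1.2) (1 : ℂ) := by
  symm
  rw [sum_finset_product _ _ (fun p => univ.filter (· < p.1) ×ˢ univ.filter (· < p.2)) ?_]
  · refine sum_congr rfl fun p _ => ?_
    rw [JM, JM, sum_mul_sum, sum_product]
    simp only [single_mul_single, one_mul]
  · simp

theorem stmt_18 (n : ℕ) :
    (∑ p ∈ Finset.univ.filter (fun p : Fin n × Fin n => p.1 < p.2),
        JM n p.1 * JM n p.2) =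
      ∑ σ ∈ Finset.univ.filter
          (fun σ : Equiv.Perm (Fin n) => σ.cycleType.sum - σ.cycleType.card = 2),
        MonoidAlgebra.single σ (1 : ℂ) := by
  rw [sum_JM_mul_JM]
  refine sum_nbij (fun q => swap q.2.1 q.1.1 * swap q.2.2 q.1.2) ?_ ?_ ?_ fun _ _ => rfl
  · rintro ⟨⟨i, j⟩, a, c⟩ hq
    simp only [mem_filter, mem_univ, true_and] at hq ⊢
    exact cycleType_sum_sub_card_swap_mul_swap hq.2.1.ne hq.2.2.ne (hq.2.1.trans hq.1).ne hq.1.ne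
  · rintro ⟨⟨i, j⟩, a, c⟩ hq ⟨⟨i', j'⟩, a', c'⟩ hq' h
    simp only [coe_filter, mem_univ, true_and, Set.mem_ofPred_eq] at hq hq'
    obtain ⟨rfl, rfl, rfl, rfl⟩ :=
      eq_of_swap_mul_swap_eq hq.2.1 hq.2.2 hq.1 hq'.2.1 hq'.2.2 hq'.1 h
    rfl
  · intro σ hσ
    simp only [coe_filter, mem_univ, true_and, Set.mem_ofPred_eq] at hσ
    obtain ⟨a, i, c, j, hai, hcj, hij, rfl⟩ :=
      exists_swap_mul_swap_of_cycleType_sum_sub_card_eq_two hσ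
    exact ⟨((i, j), a, c), by simp [hai, hcj, hij], rfl⟩
end

section
/- Jucys' theorem for e_k: in the group algebra of S_n, the k-th elementary symmetric polynomial in the Jucys–Murphy elements satisfies e_k(J_1,…,J_n) = Σ_{μ ⊢ n, |μ|−ℓ(μ)=k} C_μ, the sum of all conjugacy class sums C_μ over partitions μ of n with n − ℓ(μ) = k. -/
/-- The `k`-th elementary symmetric polynomial in the (commuting) Jucys–Murphy
elements, defined via the generating function `∏_{i=1}^n (1 + X·J_i) = Σ_k e_k X^k`. -/
noncomputable def ekJM (n k : ℕ) : MonoidAlgebra ℂ (Equiv.Perm (Fin n)) :=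
  Polynomial.coeff
    (((List.finRange n).map fun i =>
        (1 : Polynomial (MonoidAlgebra ℂ (Equiv.Perm (Fin n)))) +
          Polynomial.X * Polynomial.C (JM n i)).prod) k

open Equiv Finset Polynomial MonoidAlgebra

namespace Equiv.Perm

variable {α : Type*}

theorem SameCycle.of_forall_sameCycle_apply {f g : Perm α} (h : ∀ x, g.SameCycle x (f x))
    {x y : α} (hxy : f.SameCycle x y) : g.SameCycle x y := by
  obtain ⟨i, rfl⟩ := hxy
  induction i using Int.induction_on with
  | zero => exact SameCycle.refl _ _
  | succ i ih =>
    rw [add_comm, zpow_add, zpow_one, mul_apply]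
    exact ih.trans (h _)
  | pred i ih =>
    rw [sub_eq_neg_add, zpow_add, zpow_neg_one, mul_apply]
    exact ih.trans (by simpa using (h (f⁻¹ ((f ^ (-(i : ℤ))) x))).symm)

variable [DecidableEq α] [Fintype α]

theorem support_mul_swap_subset (σ : Perm α) (j m : α) :
    (σ * swap j m).support ⊆ σ.support ∪ {j, m} := by
  intro x hx
  have := support_mul_le σ (swap j m) hx
  rcases eq_or_ne j m with rfl | hjm
  · simp_all
  · simpa [support_swap hjm] using this

theorem support_mul_swap_of_mem_of_notMem {c : Perm α} {j m : α} (hj : j ∈ c.support)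
    (hm : m ∉ c.support) : (c * swap j m).support = insert m c.support := by
  rw [mem_support] at hj
  rw [notMem_support] at hm
  have hcj : c j ≠ m := hm ▸ c.injective.ne (by rintro rfl; exact hj hm)
  ext x
  simp only [mem_support, mul_apply, mem_insert, swap_apply_def]
  split_ifs <;> grind

theorem IsCycle.mul_swap {c : Perm α} (hc : c.IsCycle) {j m : α} (hj : c j ≠ j) (hm : c m = m) :
    (c * swap j m).IsCycle := by
  have hjm : j ≠ m := by rintro rfl; exact hj hm
  have step : ∀ x, (c * swap j m).SameCycle x (c x) := by
    intro x
    by_cases hxj : x = j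
    · subst hxj; exact ⟨2, by simp [pow_two, hm]⟩
    by_cases hxm : x = m
    · subst hxm; rw [hm]
    · exact ⟨1, by simp [swap_apply_of_ne_of_ne hxj hxm]⟩
  refine ⟨j, by simpa [hm] using hjm.symm, fun y hy => ?_⟩
  rw [← mem_support, support_mul_swap_of_mem_of_notMem (mem_support.2 hj)
    (notMem_support.2 hm), mem_insert, mem_support] at hy
  rcases hy with rfl | hy
  · exact ⟨1, by simp [hm]⟩
  · exact (hc.sameCycle hj hy).of_forall_sameCycle_apply step

-- `|μ| - ℓ(μ)` for the cycle type `μ` of `σ`, that is, `#α` minus the number of cycles of `σ`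
def cycleDefect (σ : Perm α) : ℕ :=
  σ.cycleType.sum - Multiset.card σ.cycleType

theorem card_cycleType_le_sum (σ : Perm α) : Multiset.card σ.cycleType ≤ σ.cycleType.sum := by
  simpa using Multiset.card_nsmul_le_sum fun _ h => (one_le_two.trans (two_le_of_mem_cycleType h))

theorem cycleDefect_mul_swap_of_apply_eq_self {σ : Perm α} {j m : α} (hjm : j ≠ m)
    (hj : σ j = j) (hm : σ m = m) : (σ * swap j m).cycleDefect = σ.cycleDefect + 1 := by
  have hdisj : Disjoint σ (swap j m) := by
    simp [disjoint_iff_disjoint_support, support_swap hjm, hj, hm]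
  have := card_cycleType_le_sum σ
  simp only [cycleDefect, hdisj.cycleType_mul, (isCycle_swap hjm).cycleType,
    card_support_swap hjm, Multiset.sum_add, Multiset.card_add, Multiset.sum_singleton,
    Multiset.card_singleton]
  omega

theorem cycleDefect_mul_swap {σ : Perm α} {j m : α} (hjm : j ≠ m) (hm : σ m = m) :
    (σ * swap j m).cycleDefect = σ.cycleDefect + 1 := by
  by_cases hj : σ j = j
  · exact cycleDefect_mul_swap_of_apply_eq_self hjm hj hm
  set c := σ.cycleOf j
  set τ := σ * c⁻¹
  have hcj : c j ≠ j := by rwa [cycleOf_apply_self]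
  have hcm : c m = m := notMem_support.1 fun h => notMem_support.2 hm (support_cycleOf_le σ j h)
  have hc : c.IsCycle := isCycle_cycleOf σ hj
  have hτm : τ m = m := by
    change σ (c⁻¹ m) = m
    rw [inv_eq_iff_eq.2 hcm.symm, hm]
  have hστ : σ = τ * c := by simp [τ]
  have hτc : Disjoint τ c := disjoint_mul_inv_of_mem_cycleFactorsFinset
    (cycleOf_mem_cycleFactorsFinset_iff.2 (mem_support.2 hj))
  have hsupp := support_mul_swap_of_mem_of_notMem (mem_support.2 hcj) (notMem_support.2 hcm)
  have hτc' : Disjoint τ (c * swap j m) := by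
    rw [disjoint_iff_disjoint_support] at hτc ⊢
    rw [hsupp, Finset.disjoint_insert_right]
    exact ⟨notMem_support.2 hτm, hτc⟩
  have := card_cycleType_le_sum τ
  have := hc.two_le_card_support
  rw [cycleDefect, cycleDefect, hστ, mul_assoc, hτc.cycleType_mul, hτc'.cycleType_mul,
    hc.cycleType, (hc.mul_swap hcj hcm).cycleType, hsupp,
    card_insert_of_notMem (notMem_support.2 hcm)]
  simp only [Multiset.sum_add, Multiset.card_add, Multiset.sum_singleton, Multiset.card_singleton]
  omega

theorem sum_sum_mul_swap {M : Type*} [AddCommMonoid M] (f : Perm α → M) {s : Finset α} {m : α}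
    (hm : m ∉ s) :
    ∑ σ ∈ univ.filter (fun σ : Perm α => σ.support ⊆ s), ∑ j ∈ s, f (σ * swap j m) =
      ∑ τ ∈ univ.filter (fun τ : Perm α => τ.support ⊆ insert m s ∧ τ m ≠ m), f τ := by
  rw [← sum_product']
  refine sum_nbij' (fun p => p.1 * swap p.2 m) (fun τ => (τ * swap (τ⁻¹ m) m, τ⁻¹ m))
    ?_ ?_ ?_ ?_ fun _ _ => rfl
  · rintro ⟨σ, j⟩ h
    simp only [mem_product, mem_filter, mem_univ, true_and] at h ⊢
    have hjm : j ≠ m := ne_of_mem_of_not_mem h.2 hm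
    have hσm : σ m = m := notMem_support.1 fun h' => hm (h.1 h')
    refine ⟨(support_mul_swap_subset σ j m).trans
      (union_subset (h.1.trans (subset_insert m s)) (by simp [insert_subset_iff, h.2])), ?_⟩
    rw [mul_apply, swap_apply_right]
    exact fun h' => hjm (σ.injective (h'.trans hσm.symm))
  · intro τ h
    simp only [mem_product, mem_filter, mem_univ, true_and] at h ⊢
    have hτj : τ (τ⁻¹ m) = m := τ.apply_symm_apply m
    have hjm : τ⁻¹ m ≠ m := fun e => h.2 (by rwa [e] at hτj)
    have hj : τ⁻¹ m ∈ s := by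
      simpa only [mem_insert, hjm, false_or] using h.1 (mem_support.2 (hτj.trans_ne hjm.symm))
    refine ⟨fun x hx => ?_, hj⟩
    have hxm : x ≠ m := by
      rintro rfl
      exact mem_support.1 hx (by rw [mul_apply, swap_apply_right, hτj])
    have := support_mul_swap_subset τ _ m hx
    simp only [mem_union, mem_insert, mem_singleton, hxm, or_false] at this
    rcases this with hx | rfl
    · simpa [hxm] using h.1 hx
    · exact hj
  · rintro ⟨σ, j⟩ h
    simp only [mem_product, mem_filter, mem_univ, true_and] at h
    have hσm : σ m = m := notMem_support.1 fun h' => hm (h.1 h')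
    have hinv : (σ * swap j m)⁻¹ m = j := by
      rw [inv_eq_iff_eq, mul_apply, swap_apply_left, hσm]
    simp only [hinv, mul_swap_mul_self]
  · intro τ _
    exact mul_swap_mul_self _ m τ

end Equiv.Perm

section CycleDefectPoly

variable (R : Type*) [Semiring R] {α : Type*} [DecidableEq α] [Fintype α]

noncomputable def cycleDefectPoly (s : Finset α) : (MonoidAlgebra R (Perm α))[X] :=
  ∑ σ ∈ univ.filter (fun σ : Perm α => σ.support ⊆ s), monomial σ.cycleDefect (single σ 1)

theorem coeff_cycleDefectPoly (s : Finset α) (k : ℕ) :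
    (cycleDefectPoly R s).coeff k =
      ∑ σ ∈ univ.filter (fun σ : Perm α => σ.support ⊆ s ∧ σ.cycleDefect = k), single σ 1 := by
  rw [cycleDefectPoly, finsetSum_coeff, ← filter_filter,
    sum_filter fun σ : Perm α => σ.cycleDefect = k]
  simp only [coeff_monomial]

theorem cycleDefectPoly_insert {s : Finset α} {m : α} (hm : m ∉ s) :
    cycleDefectPoly R (insert m s) =
      cycleDefectPoly R s * (1 + X * C (∑ j ∈ s, single (swap j m) 1)) := by
  have hsplit : cycleDefectPoly R (insert m s) = cycleDefectPoly R s +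
      ∑ τ ∈ univ.filter (fun τ : Perm α => τ.support ⊆ insert m s ∧ τ m ≠ m),
        monomial τ.cycleDefect (single τ (1 : R)) := by
    rw [cycleDefectPoly, ← sum_filter_add_sum_filter_not _ (fun τ : Perm α => τ m = m),
      filter_filter, filter_filter, cycleDefectPoly]
    congr 2
    ext τ
    simp only [mem_filter, mem_univ, true_and, ← Perm.notMem_support]
    exact ⟨fun h => (subset_insert_iff_of_notMem h.2).1 h.1,
      fun h => ⟨h.trans (subset_insert m s), fun h' => hm (h h')⟩⟩
  rw [hsplit, mul_add, mul_one, ← Perm.sum_sum_mul_swap _ hm, X_mul, C_mul_X_eq_monomial,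
    cycleDefectPoly, sum_mul]
  congr 1
  refine sum_congr rfl fun σ hσ => ?_
  rw [monomial_mul_monomial, mul_sum, map_sum]
  refine sum_congr rfl fun j hj => ?_
  rw [mem_filter] at hσ
  rw [single_mul_single, one_mul, Perm.cycleDefect_mul_swap (ne_of_mem_of_not_mem hj hm)
    (Perm.notMem_support.1 fun h => hm (hσ.2 h))]

end CycleDefectPoly

theorem prod_take_eq_cycleDefectPoly {n m : ℕ} (hm : m ≤ n) :
    (((List.finRange n).map fun i =>
        (1 : (MonoidAlgebra ℂ (Perm (Fin n)))[X]) + X * C (JM n i)).take m).prod =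
      cycleDefectPoly ℂ (univ.filter fun x : Fin n => (x : ℕ) < m) := by
  induction m with
  | zero =>
    simp [cycleDefectPoly, filter_eq', Perm.cycleDefect, ← MonoidAlgebra.one_def]
  | succ m ih =>
    have hinsert : univ.filter (fun x : Fin n => (x : ℕ) < m + 1) =
        insert ⟨m, hm⟩ (univ.filter fun x : Fin n => (x : ℕ) < m) := by
      ext x
      simp only [mem_filter, mem_univ, true_and, mem_insert, Fin.ext_iff]
      omega
    rw [List.prod_take_succ _ _ (by simpa using hm), ih (by omega), hinsert,
      cycleDefectPoly_insert ℂ (by simp)]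
    simp only [List.getElem_map, List.getElem_finRange]
    rfl

theorem stmt_19 (n k : ℕ) :
    ekJM n k =
      ∑ σ ∈ Finset.univ.filter
          (fun σ : Equiv.Perm (Fin n) => σ.cycleType.sum - σ.cycleType.card = k),
        MonoidAlgebra.single σ (1 : ℂ) := by
  have hprod := prod_take_eq_cycleDefectPoly (le_refl n)
  rw [List.take_of_length_le (by simp)] at hprod
  rw [ekJM, hprod, coeff_cycleDefectPoly]
  simp [Perm.cycleDefect]
end
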